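/- arXiv:1009.0683 — 8 statements merged into one kernel-verified Lean document; each statement's English description precedes it below -/
import Mathlib

section
/- Let x, y ∈ ℝ with x ≠ y. Then the Airy kernel admits the Christoffel–Darboux representation K(x,y) = (A(x)·A'(y) − A(y)·A'(x)) / (x − y). -/
open MeasureTheory Real Filter Set

/-- Christoffel–Darboux representation of the Airy kernel:
`K(x,y) = (A(x)·A'(y) − A(y)·A'(x)) / (x − y)` for `x ≠ y`. -/
theorem airy_kernel_christoffel_darboux
    (A : ℝ → ℝ) (hA : ContDiff ℝ (⊤ : ℕ∞) A)
    (hAiry : ∀ x : ℝ, deriv (deriv A) x = x * A x)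
    (hInt : ∀ (c : ℝ) (n : ℕ),
      IntegrableOn (fun z => z ^ n * Real.exp (c * z) * A z) (Ioi 0))
    (hInt' : ∀ (c : ℝ) (n : ℕ),
      IntegrableOn (fun z => z ^ n * Real.exp (c * z) * deriv A z) (Ioi 0))
    (hLim : ∀ (c : ℝ) (n : ℕ),
      Tendsto (fun z => z ^ n * Real.exp (c * z) * A z) atTop (nhds 0))
    (hLim' : ∀ (c : ℝ) (n : ℕ),
      Tendsto (fun z => z ^ n * Real.exp (c * z) * deriv A z) atTop (nhds 0))
    (K : ℝ → ℝ → ℝ)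
    (hK : ∀ x y : ℝ, K x y = ∫ l in Ioi (0:ℝ), A (x + l) * A (y + l))
    (x y : ℝ) (hxy : x ≠ y) :
    K x y = (A x * deriv A y - A y * deriv A x) / (x - y) := by
  -- basic regularity
  have hAc : Continuous A := hA.continuous
  have hAd : Differentiable ℝ A := hA.differentiable (by simp)
  have hAinf : ContDiff ℝ (↑(⊤:ℕ∞)) A := hA.of_le (by simp)
  have hA'd : Differentiable ℝ (deriv A) :=
    ((contDiff_infty_iff_deriv.mp hAinf).2).differentiable (by simp)
  have hA'c : Continuous (deriv A) := hA'd.continuous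
  -- limits at +∞
  have hA0 : Tendsto A atTop (nhds 0) := by
    have := hLim 0 0; simpa using this
  have hA'0 : Tendsto (deriv A) atTop (nhds 0) := by
    have := hLim' 0 0; simpa using this
  -- A is integrable on Ioi 0, hence on Ioi y for any y
  have hAint0 : IntegrableOn A (Ioi 0) := by
    have := hInt 0 0; simpa using this
  have hAintIoi : ∀ a : ℝ, IntegrableOn A (Ioi a) := by
    intro a
    rcases le_or_gt 0 a with h | h
    · exact hAint0.mono_set (Ioi_subset_Ioi h)
    · have h1 : IntegrableOn A (Ioc a 0) :=
        (hAc.continuousOn).integrableOn_Icc.mono_set Ioc_subset_Icc_self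
      have h2 : Ioi a ⊆ Ioc a 0 ∪ Ioi 0 := by
        intro z hz
        rcases le_or_gt z 0 with hz0 | hz0
        · exact Or.inl ⟨hz, hz0⟩
        · exact Or.inr hz0
      exact ((h1.union hAint0).mono_set h2)
  -- shifted integrability
  have hshift : ∀ a : ℝ, IntegrableOn (fun l => A (a + l)) (Ioi 0) := by
    intro a
    have h1 : MeasurePreserving (fun l : ℝ => a + l) volume volume :=
      measurePreserving_add_left volume a
    have h2 : MeasurableEmbedding (fun l : ℝ => a + l) :=
      (MeasurableEquiv.addLeft a).measurableEmbedding
    have h3 : (fun l : ℝ => a + l) ⁻¹' (Ioi a) = Ioi 0 := by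
      ext l; simp [Set.mem_Ioi]
    have := (h1.integrableOn_comp_preimage h2 (s := Ioi a)).mpr (hAintIoi a)
    rwa [h3] at this
  -- boundedness of A on a tail
  have hbdd : ∀ a : ℝ, ∃ C : ℝ, ∀ z ∈ Ici a, |A z| ≤ C := by
    intro a
    obtain ⟨M, hM⟩ := (hA0.eventually (Metric.ball_mem_nhds (0:ℝ) one_pos)).exists_forall_of_atTop
    obtain ⟨C, hC⟩ := (isCompact_Icc (a := a) (b := M)).exists_bound_of_continuousOn
      hAc.continuousOn
    refine ⟨max C 1, fun z hz => ?_⟩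
    rcases le_or_gt z M with h | h
    · exact le_trans (by simpa using hC z ⟨hz, h⟩) (le_max_left _ _)
    · have := hM z h.le
      simp only [Metric.mem_ball, Real.dist_eq, sub_zero] at this
      exact le_trans this.le (le_max_right _ _)
  -- integrability of the product
  have hprod : ∀ a b : ℝ, IntegrableOn (fun l => A (a + l) * A (b + l)) (Ioi 0) := by
    intro a b
    obtain ⟨C, hC⟩ := hbdd a
    refine Integrable.mono' (((hshift b).norm.const_mul C)) ?_ ?_
    · exact ((hAc.comp (continuous_const.add continuous_id)).mul
        (hAc.comp (continuous_const.add continuous_id))).aestronglyMeasurable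
    · filter_upwards [ae_restrict_mem measurableSet_Ioi] with l hl
      have h1 : |A (a + l)| ≤ C := hC _ (by simp [Set.mem_Ici]; linarith [le_of_lt (mem_Ioi.mp hl)])
      have h2 : (0:ℝ) ≤ |A (b + l)| := abs_nonneg _
      calc ‖A (a + l) * A (b + l)‖ = |A (a + l)| * |A (b + l)| := by
            rw [Real.norm_eq_abs, abs_mul]
        _ ≤ C * |A (b + l)| := mul_le_mul_of_nonneg_right h1 h2
        _ = C * ‖A (b + l)‖ := by rw [Real.norm_eq_abs]
  -- the Wronskian-type function
  set F : ℝ → ℝ := fun l => A (x + l) * deriv A (y + l) - A (y + l) * deriv A (x + l) with hF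
  have hFderiv : ∀ l : ℝ, HasDerivAt F ((y - x) * (A (x + l) * A (y + l))) l := by
    intro l
    have hx1 : HasDerivAt (fun l => A (x + l)) (deriv A (x + l)) l := by
      have := ((hAd (x + l)).hasDerivAt).comp l ((hasDerivAt_id l).const_add x)
      simpa [Function.comp_def] using this
    have hy1 : HasDerivAt (fun l => A (y + l)) (deriv A (y + l)) l := by
      have := ((hAd (y + l)).hasDerivAt).comp l ((hasDerivAt_id l).const_add y)
      simpa [Function.comp_def] using this
    have hx2 : HasDerivAt (fun l => deriv A (x + l)) ((x + l) * A (x + l)) l := by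
      have := ((hA'd (x + l)).hasDerivAt).comp l ((hasDerivAt_id l).const_add x)
      simpa [hAiry (x + l), Function.comp_def] using this
    have hy2 : HasDerivAt (fun l => deriv A (y + l)) ((y + l) * A (y + l)) l := by
      have := ((hA'd (y + l)).hasDerivAt).comp l ((hasDerivAt_id l).const_add y)
      simpa [hAiry (y + l), Function.comp_def] using this
    have := (hx1.mul hy2).sub (hy1.mul hx2)
    refine this.congr_deriv ?_
    ring
  have hFtend : Tendsto F atTop (nhds 0) := by
    have t1 : Tendsto (fun l => A (x + l)) atTop (nhds 0) :=
      hA0.comp (tendsto_atTop_add_const_left _ x tendsto_id)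
    have t2 : Tendsto (fun l => A (y + l)) atTop (nhds 0) :=
      hA0.comp (tendsto_atTop_add_const_left _ y tendsto_id)
    have t3 : Tendsto (fun l => deriv A (x + l)) atTop (nhds 0) :=
      hA'0.comp (tendsto_atTop_add_const_left _ x tendsto_id)
    have t4 : Tendsto (fun l => deriv A (y + l)) atTop (nhds 0) :=
      hA'0.comp (tendsto_atTop_add_const_left _ y tendsto_id)
    have := (t1.mul t4).sub (t2.mul t3)
    simpa using this
  have hint : IntegrableOn (fun l => (y - x) * (A (x + l) * A (y + l))) (Ioi 0) :=
    (hprod x y).const_mul _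
  have key : (∫ l in Ioi (0:ℝ), (y - x) * (A (x + l) * A (y + l))) = 0 - F 0 :=
    integral_Ioi_of_hasDerivAt_of_tendsto' (fun l _ => hFderiv l) hint hFtend
  have key2 : (y - x) * (∫ l in Ioi (0:ℝ), A (x + l) * A (y + l)) = - F 0 := by
    rw [← MeasureTheory.integral_const_mul, key]; ring
  rw [hK x y]
  have hyx : y - x ≠ 0 := sub_ne_zero.mpr (Ne.symm hxy)
  have : (∫ l in Ioi (0:ℝ), A (x + l) * A (y + l)) = - F 0 / (y - x) := by
    field_simp at key2 ⊢
    linarith [key2]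
  rw [this]
  simp only [hF, add_zero]
  have hxy' : x - y ≠ 0 := sub_ne_zero.mpr hxy
  field_simp
  ring
end

section
/- For all x, y ∈ ℝ, the Airy kernel satisfies (∂x² − ∂y²)K(x,y) = (x − y)·K(x,y), where ∂x and ∂y denote partial differentiation in the first and second argument respectively. -/
open MeasureTheory Real Filter Set

/-- A continuous function with `exp (2z) * f z → 0` satisfies `|f z| ≤ C e^{-2z}` on `[b, ∞)`. -/
lemma airy_decay_bound (f : ℝ → ℝ) (hf : Continuous f)
    (h : Tendsto (fun z => Real.exp (2 * z) * f z) atTop (nhds 0)) (b : ℝ) :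
    ∃ C, 0 ≤ C ∧ ∀ z, b ≤ z → |f z| ≤ C * Real.exp (-(2 * z)) := by
  have h1 : ∀ᶠ z in atTop, ‖Real.exp (2 * z) * f z‖ < 1 :=
    (NormedAddCommGroup.tendsto_nhds_zero.mp h) 1 one_pos
  obtain ⟨N, hN⟩ := eventually_atTop.mp h1
  have hcont : ContinuousOn (fun z => Real.exp (2 * z) * f z) (Icc b N) :=
    ((Real.continuous_exp.comp (continuous_const.mul continuous_id)).mul hf).continuousOn
  obtain ⟨C₀, hC₀⟩ := (isCompact_Icc (a := b) (b := N)).exists_bound_of_continuousOn hcont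
  refine ⟨max C₀ 1, le_trans zero_le_one (le_max_right _ _), fun z hz => ?_⟩
  have key : |Real.exp (2 * z) * f z| ≤ max C₀ 1 := by
    rcases le_total z N with hzN | hzN
    · exact le_trans (hC₀ z ⟨hz, hzN⟩) (le_max_left _ _)
    · exact le_trans (le_of_lt (hN z hzN)) (le_max_right _ _)
  have hfz : f z = Real.exp (-(2 * z)) * (Real.exp (2 * z) * f z) := by
    rw [← mul_assoc, ← Real.exp_add]; simp
  rw [hfz, abs_mul, abs_of_pos (Real.exp_pos _), mul_comm]
  exact mul_le_mul_of_nonneg_right key (le_of_lt (Real.exp_pos _))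

/-- Shift a decay limit. -/
lemma airy_shift_lim (f : ℝ → ℝ)
    (h : Tendsto (fun z => Real.exp (2 * z) * f z) atTop (nhds 0)) (y : ℝ) :
    Tendsto (fun l => Real.exp (2 * l) * f (y + l)) atTop (nhds 0) := by
  have h2 : Tendsto (fun l : ℝ => y + l) atTop atTop :=
    tendsto_atTop_add_const_left atTop y tendsto_id
  have h3 := (h.comp h2).const_mul (Real.exp (-(2 * y)))
  rw [mul_zero] at h3
  refine h3.congr fun l => ?_
  simp only [Function.comp]
  rw [← mul_assoc, ← Real.exp_add]
  ring_nf

/-- Differentiation under the integral sign for integrands of the form `f (x' + l) * g l`. -/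
lemma airy_deriv_under (f g : ℝ → ℝ) (hfd : Differentiable ℝ f) (hf'c : Continuous (deriv f))
    (hgc : Continuous g)
    (hLf : Tendsto (fun z => Real.exp (2 * z) * f z) atTop (nhds 0))
    (hLf' : Tendsto (fun z => Real.exp (2 * z) * deriv f z) atTop (nhds 0))
    (hLg : Tendsto (fun z => Real.exp (2 * z) * g z) atTop (nhds 0)) (x : ℝ) :
    IntegrableOn (fun l => deriv f (x + l) * g l) (Ioi 0) ∧
      HasDerivAt (fun x' => ∫ l in Ioi (0 : ℝ), f (x' + l) * g l)
        (∫ l in Ioi (0 : ℝ), deriv f (x + l) * g l) x := by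
  obtain ⟨C, hC0, hC⟩ := airy_decay_bound f hfd.continuous hLf (x - 1)
  obtain ⟨C', hC'0, hC'⟩ := airy_decay_bound (deriv f) hf'c hLf' (x - 1)
  obtain ⟨D, hD0, hD⟩ := airy_decay_bound g hgc hLg 0
  -- measurability of the integrands
  have hmeas : ∀ x' : ℝ, AEStronglyMeasurable (fun l => f (x' + l) * g l)
      (volume.restrict (Ioi (0 : ℝ))) := fun x' =>
    ((hfd.continuous.comp (continuous_const.add continuous_id)).mul hgc).aestronglyMeasurable
  have hmeas' : AEStronglyMeasurable (fun l => deriv f (x + l) * g l)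
      (volume.restrict (Ioi (0 : ℝ))) :=
    ((hf'c.comp (continuous_const.add continuous_id)).mul hgc).aestronglyMeasurable
  -- integrability of the base integrand
  have hbase : IntegrableOn (fun l => f (x + l) * g l) (Ioi 0) := by
    have hbint : IntegrableOn
        (fun l => C * Real.exp (-(2 * x)) * D * Real.exp (-(4 : ℝ) * l)) (Ioi 0) :=
      (exp_neg_integrableOn_Ioi 0 (by norm_num : (0:ℝ) < 4)).const_mul _
    refine Integrable.mono' hbint (hmeas x) ?_
    rw [ae_restrict_iff' measurableSet_Ioi]
    refine ae_of_all _ fun l hl => ?_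
    have hl0 : (0 : ℝ) < l := hl
    have h1 : |f (x + l)| ≤ C * Real.exp (-(2 * (x + l))) :=
      hC (x + l) (by linarith)
    have h2 : |g l| ≤ D * Real.exp (-(2 * l)) := hD l (le_of_lt hl0)
    have := mul_le_mul h1 h2 (abs_nonneg _)
      (mul_nonneg hC0 (le_of_lt (Real.exp_pos _)))
    rw [Real.norm_eq_abs, abs_mul]
    refine le_trans this (le_of_eq ?_)
    rw [show (-(2 * (x + l))) = -(2 * x) + (-(2:ℝ) * l) by ring, Real.exp_add,
      show (-(4:ℝ) * l) = (-(2:ℝ) * l) + (-(2:ℝ) * l) by ring, Real.exp_add]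
    ring
  -- bound for the derivative integrand, uniform on ball x 1
  set bound : ℝ → ℝ := fun l => C' * Real.exp (2 - 2 * x) * D * Real.exp (-(4 : ℝ) * l) with hbdef
  have hbint : IntegrableOn bound (Ioi 0) :=
    (exp_neg_integrableOn_Ioi 0 (by norm_num : (0:ℝ) < 4)).const_mul _
  have h_bound : ∀ l ∈ Ioi (0:ℝ), ∀ x' ∈ Metric.ball x 1,
      ‖deriv f (x' + l) * g l‖ ≤ bound l := by
    intro l hl x' hx'
    have hl0 : (0 : ℝ) < l := hl
    have hx'1 : |x' - x| < 1 := by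
      simpa [Real.dist_eq] using hx'
    have hxl : x - 1 ≤ x' + l := by
      have := abs_lt.mp hx'1
      linarith [this.1]
    have h1 : |deriv f (x' + l)| ≤ C' * Real.exp (-(2 * (x' + l))) := hC' _ hxl
    have h2 : |g l| ≤ D * Real.exp (-(2 * l)) := hD l (le_of_lt hl0)
    have h3 : Real.exp (-(2 * (x' + l))) ≤ Real.exp (2 - 2 * x - 2 * l) := by
      apply Real.exp_le_exp.mpr
      have := abs_lt.mp hx'1
      linarith [this.1]
    have h4 : |deriv f (x' + l)| ≤ C' * Real.exp (2 - 2 * x - 2 * l) :=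
      le_trans h1 (mul_le_mul_of_nonneg_left h3 hC'0)
    have := mul_le_mul h4 h2 (abs_nonneg _)
      (mul_nonneg hC'0 (le_of_lt (Real.exp_pos _)))
    rw [Real.norm_eq_abs, abs_mul]
    refine le_trans this (le_of_eq ?_)
    rw [hbdef]
    simp only
    rw [show (2 - 2 * x - 2 * l : ℝ) = (2 - 2 * x) + (-(2:ℝ) * l) by ring, Real.exp_add,
      show (-(4:ℝ) * l) = (-(2:ℝ) * l) + (-(2:ℝ) * l) by ring, Real.exp_add]
    ring
  -- pointwise differentiability
  have h_diff : ∀ l : ℝ, ∀ x' : ℝ,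
      HasDerivAt (fun x'' => f (x'' + l) * g l) (deriv f (x' + l) * g l) x' := by
    intro l x'
    have h1 : HasDerivAt (fun x'' : ℝ => x'' + l) 1 x' := (hasDerivAt_id x').add_const l
    have h2 := ((hfd (x' + l)).hasDerivAt.comp x' h1)
    simpa [Function.comp] using h2.mul_const (g l)
  have := hasDerivAt_integral_of_dominated_loc_of_deriv_le (μ := volume.restrict (Ioi 0))
    (F := fun x' l => f (x' + l) * g l) (F' := fun x' l => deriv f (x' + l) * g l)
    (x₀ := x) (bound := bound) (Metric.ball_mem_nhds x one_pos)
    (Eventually.of_forall fun x' => hmeas x') hbase hmeas'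
    ((ae_restrict_iff' measurableSet_Ioi).mpr (ae_of_all _ h_bound)) hbint
    ((ae_restrict_iff' measurableSet_Ioi).mpr (ae_of_all _ fun l _ x' _ => h_diff l x'))
  exact this

theorem airy_kernel_second_deriv_identity
    (A : ℝ → ℝ) (hA : ContDiff ℝ (⊤ : ℕ∞) A)
    (hAiry : ∀ x : ℝ, deriv (deriv A) x = x * A x)
    (hInt : ∀ (c : ℝ) (n : ℕ),
      IntegrableOn (fun z => z ^ n * Real.exp (c * z) * A z) (Ioi 0))
    (hInt' : ∀ (c : ℝ) (n : ℕ),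
      IntegrableOn (fun z => z ^ n * Real.exp (c * z) * deriv A z) (Ioi 0))
    (hLim : ∀ (c : ℝ) (n : ℕ),
      Tendsto (fun z => z ^ n * Real.exp (c * z) * A z) atTop (nhds 0))
    (hLim' : ∀ (c : ℝ) (n : ℕ),
      Tendsto (fun z => z ^ n * Real.exp (c * z) * deriv A z) atTop (nhds 0))
    (K : ℝ → ℝ → ℝ)
    (hK : ∀ x y : ℝ, K x y = ∫ l in Ioi (0:ℝ), A (x + l) * A (y + l))
    (x y : ℝ) :
    iteratedDeriv 2 (fun x' => K x' y) x - iteratedDeriv 2 (fun y' => K x y') y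
      = (x - y) * K x y := by
  -- basic regularity facts
  have hA2 : ContDiff ℝ ((⊤:ℕ∞):WithTop ℕ∞) A := hA.of_le (by simp)
  have hAd : Differentiable ℝ A := hA2.differentiable (by simp)
  have hA' : ContDiff ℝ ((⊤:ℕ∞):WithTop ℕ∞) (deriv A) := (contDiff_infty_iff_deriv.mp hA2).2
  have hA'd : Differentiable ℝ (deriv A) := hA'.differentiable (by simp)
  have hA'c : Continuous (deriv A) := hA'.continuous
  have hA''eq : deriv (deriv A) = fun z => z * A z := funext hAiry
  have hA''c : Continuous (deriv (deriv A)) := by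
    rw [hA''eq]; exact continuous_id.mul hA2.continuous
  -- decay limits with rate 2
  have eA : Tendsto (fun z => Real.exp (2 * z) * A z) atTop (nhds 0) := by
    have := hLim 2 0
    simpa using this
  have eA' : Tendsto (fun z => Real.exp (2 * z) * deriv A z) atTop (nhds 0) := by
    have := hLim' 2 0
    simpa using this
  have eA'' : Tendsto (fun z => Real.exp (2 * z) * deriv (deriv A) z) atTop (nhds 0) := by
    have h1 := hLim 2 1
    refine h1.congr fun z => ?_
    rw [hAiry]; ring
  -- derivative of x' ↦ K x' y
  have hKx : (fun x' => K x' y) = fun x' => ∫ l in Ioi (0:ℝ), A (x' + l) * A (y + l) :=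
    funext fun x' => hK x' y
  have hKy : (fun y' => K x y') = fun y' => ∫ l in Ioi (0:ℝ), A (y' + l) * A (x + l) := by
    funext y'
    rw [hK]
    congr 1
    funext l
    ring
  have dx1 : ∀ x' : ℝ, HasDerivAt (fun x'' => ∫ l in Ioi (0:ℝ), A (x'' + l) * A (y + l))
      (∫ l in Ioi (0:ℝ), deriv A (x' + l) * A (y + l)) x' := fun x' =>
    (airy_deriv_under A (fun l => A (y + l)) hAd hA'c
      (hA2.continuous.comp (continuous_const.add continuous_id))
      eA eA' (airy_shift_lim A eA y) x').2
  have dy1 : ∀ y' : ℝ, HasDerivAt (fun y'' => ∫ l in Ioi (0:ℝ), A (y'' + l) * A (x + l))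
      (∫ l in Ioi (0:ℝ), deriv A (y' + l) * A (x + l)) y' := fun y' =>
    (airy_deriv_under A (fun l => A (x + l)) hAd hA'c
      (hA2.continuous.comp (continuous_const.add continuous_id))
      eA eA' (airy_shift_lim A eA x) y').2
  have dx2 := airy_deriv_under (deriv A) (fun l => A (y + l)) hA'd hA''c
      (hA2.continuous.comp (continuous_const.add continuous_id))
      eA' eA'' (airy_shift_lim A eA y) x
  have dy2 := airy_deriv_under (deriv A) (fun l => A (x + l)) hA'd hA''c
      (hA2.continuous.comp (continuous_const.add continuous_id))
      eA' eA'' (airy_shift_lim A eA x) y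
  -- compute the second derivatives
  have hdKx : deriv (fun x' => K x' y) = fun x' => ∫ l in Ioi (0:ℝ), deriv A (x' + l) * A (y + l) := by
    rw [hKx]; exact funext fun x' => (dx1 x').deriv
  have hdKy : deriv (fun y' => K x y') = fun y' => ∫ l in Ioi (0:ℝ), deriv A (y' + l) * A (x + l) := by
    rw [hKy]; exact funext fun y' => (dy1 y').deriv
  have h2x : iteratedDeriv 2 (fun x' => K x' y) x
      = ∫ l in Ioi (0:ℝ), deriv (deriv A) (x + l) * A (y + l) := by
    rw [show (2:ℕ) = 1 + 1 from rfl, iteratedDeriv_succ, iteratedDeriv_one, hdKx]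
    exact dx2.2.deriv
  have h2y : iteratedDeriv 2 (fun y' => K x y') y
      = ∫ l in Ioi (0:ℝ), deriv (deriv A) (y + l) * A (x + l) := by
    rw [show (2:ℕ) = 1 + 1 from rfl, iteratedDeriv_succ, iteratedDeriv_one, hdKy]
    exact dy2.2.deriv
  rw [h2x, h2y, ← integral_sub dx2.1 dy2.1, hK]
  have hptw : ∀ l : ℝ, deriv (deriv A) (x + l) * A (y + l) - deriv (deriv A) (y + l) * A (x + l)
      = (x - y) * (A (x + l) * A (y + l)) := by
    intro l
    rw [hAiry, hAiry]; ring
  calc (∫ l in Ioi (0:ℝ),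
        (deriv (deriv A) (x + l) * A (y + l) - deriv (deriv A) (y + l) * A (x + l)))
      = ∫ l in Ioi (0:ℝ), (x - y) * (A (x + l) * A (y + l)) := by
        congr 1; funext l; exact hptw l
    _ = (x - y) * ∫ l in Ioi (0:ℝ), A (x + l) * A (y + l) := MeasureTheory.integral_const_mul _ _
end

section
/- For all x, y ∈ ℝ, the Airy kernel satisfies (∂x⁴ − ∂y⁴)K(x,y) = (x² − y²)·K(x,y), where ∂x and ∂y denote partial differentiation in the first and second argument respectively. -/
open MeasureTheory Real Filter Set

private lemma airy_bdd {f : ℝ → ℝ} (hf : Continuous f) (h0 : Tendsto f atTop (nhds 0)) (a : ℝ) :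
    ∃ C, 1 ≤ C ∧ ∀ s, a ≤ s → |f s| ≤ C := by
  rw [Metric.tendsto_atTop] at h0
  obtain ⟨N, hN⟩ := h0 1 one_pos
  obtain ⟨C, hC⟩ := (isCompact_Icc (a := a) (b := N)).exists_bound_of_continuousOn
    hf.continuousOn
  refine ⟨max C 1, le_max_right _ _, fun s hs => ?_⟩
  rcases le_or_gt s N with h | h
  · exact le_trans (hC s ⟨hs, h⟩) (le_max_left _ _)
  · have := hN s h.le
    rw [Real.dist_eq, sub_zero] at this
    exact this.le.trans (le_max_right _ _)

private lemma airy_shift {g : ℝ → ℝ} {v : ℝ} (h : IntegrableOn g (Ioi v)) :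
    IntegrableOn (fun l => g (v + l)) (Ioi 0) := by
  rw [← integrable_indicator_iff measurableSet_Ioi] at h ⊢
  have h2 := h.comp_add_left v
  have he : (fun l => (Ioi v).indicator g (v + l))
      = (Ioi 0).indicator (fun l => g (v + l)) := by
    funext l
    simp [indicator_apply, mem_Ioi, lt_add_iff_pos_right]
  rw [← he]
  exact h2

private lemma airy_monint {A : ℝ → ℝ} (hAc : Continuous A)
    (hInt : ∀ (c : ℝ) (n : ℕ),
      IntegrableOn (fun z => z ^ n * Real.exp (c * z) * A z) (Ioi 0))
    (v : ℝ) (j : ℕ) : IntegrableOn (fun z => z ^ j * A z) (Ioi v) := by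
  have h1 : IntegrableOn (fun z => z ^ j * A z) (Ioi 0) := by
    simpa using hInt 0 j
  have h2 : IntegrableOn (fun z => z ^ j * A z) (Ioc v 0) :=
    (Continuous.integrableOn_Ioc (by continuity))
  refine (h2.union h1).mono_set ?_
  intro z hz
  rcases le_or_gt z 0 with h | h
  · exact Or.inl ⟨hz, h⟩
  · exact Or.inr h

private lemma airy_I2 {A : ℝ → ℝ} (hAc : Continuous A)
    (hInt : ∀ (c : ℝ) (n : ℕ),
      IntegrableOn (fun z => z ^ n * Real.exp (c * z) * A z) (Ioi 0))
    (v : ℝ) : IntegrableOn (fun l => (1 + l) ^ 2 * A (v + l)) (Ioi 0) := by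
  have h : IntegrableOn (fun z => (1 + (z - v)) ^ 2 * A z) (Ioi v) := by
    have h0 := (airy_monint hAc hInt v 0).const_mul ((1 - v) ^ 2)
    have h1 := (airy_monint hAc hInt v 1).const_mul (2 * (1 - v))
    have h2 := airy_monint hAc hInt v 2
    have h3 := (h0.add h1).add h2
    refine MeasureTheory.IntegrableOn.congr_fun h3 (fun z _ => ?_) measurableSet_Ioi
    simp only [Pi.add_apply]
    ring
  have h4 := airy_shift h
  simpa using h4

private lemma airy_dom_int {A : ℝ → ℝ} (hAc : Continuous A)
    (hInt : ∀ (c : ℝ) (n : ℕ),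
      IntegrableOn (fun z => z ^ n * Real.exp (c * z) * A z) (Ioi 0))
    (v : ℝ) {h : ℝ → ℝ} (hc : Continuous h) {M : ℝ}
    (hbd : ∀ l, 0 < l → |h l| ≤ M * ((1 + l) ^ 2 * |A (v + l)|)) :
    IntegrableOn h (Ioi 0) := by
  have hI := ((airy_I2 hAc hInt v).const_mul M).abs
  refine Integrable.mono' hI hc.aestronglyMeasurable ?_
  filter_upwards [ae_restrict_mem measurableSet_Ioi] with l hl
  rw [Real.norm_eq_abs]
  refine (hbd l hl).trans ?_
  rw [abs_mul, abs_mul]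
  have h1 : |(1 + l) ^ 2| = (1 + l) ^ 2 := abs_of_nonneg (by positivity)
  rw [h1]
  exact mul_le_mul_of_nonneg_right (le_abs_self M)
    (mul_nonneg (sq_nonneg _) (abs_nonneg _))

private lemma airy_param_deriv {A : ℝ → ℝ} (hAc : Continuous A)
    (hInt : ∀ (c : ℝ) (n : ℕ),
      IntegrableOn (fun z => z ^ n * Real.exp (c * z) * A z) (Ioi 0))
    (u v : ℝ) {f g : ℝ → ℝ} (hfc : Continuous f) (hgc : Continuous g)
    (hfg : ∀ t, HasDerivAt f (g t) t)
    {M : ℝ}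
    (hbdf : ∀ l, 0 < l → |f (u + l)| ≤ M * (1 + l) ^ 2)
    (hbdg : ∀ x' l, x' ∈ Metric.ball u 1 → 0 < l → |g (x' + l)| ≤ M * (1 + l) ^ 2) :
    IntegrableOn (fun l => g (u + l) * A (v + l)) (Ioi 0) ∧
    HasDerivAt (fun u' => ∫ l in Ioi (0:ℝ), f (u' + l) * A (v + l))
      (∫ l in Ioi (0:ℝ), g (u + l) * A (v + l)) u := by
  have key := hasDerivAt_integral_of_dominated_loc_of_deriv_le
    (F := fun u' l => f (u' + l) * A (v + l))
    (F' := fun u' l => g (u' + l) * A (v + l))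
    (μ := volume.restrict (Ioi (0:ℝ))) (x₀ := u)
    (bound := fun l => |M * ((1 + l) ^ 2 * A (v + l))|)
    (Metric.ball_mem_nhds u one_pos)
    (Eventually.of_forall fun x' =>
      ((hfc.comp (continuous_const.add continuous_id)).mul
        (hAc.comp (continuous_const.add continuous_id))).aestronglyMeasurable)
    ?_ ?_ ?_ ?_ ?_
  · exact key
  · -- integrable at u
    refine airy_dom_int (M := M) hAc hInt v
      ((hfc.comp (continuous_const.add continuous_id)).mul
        (hAc.comp (continuous_const.add continuous_id))) (fun l hl => ?_)
    rw [abs_mul]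
    have := hbdf l hl
    nlinarith [abs_nonneg (A (v + l)), abs_nonneg (f (u + l))]
  · exact ((hgc.comp (continuous_const.add continuous_id)).mul
        (hAc.comp (continuous_const.add continuous_id))).aestronglyMeasurable
  · filter_upwards [ae_restrict_mem measurableSet_Ioi] with l hl
    intro x' hx'
    rw [Real.norm_eq_abs, abs_mul]
    have h1 := hbdg x' l hx' hl
    rw [abs_mul, abs_mul]
    have h2 : |(1 + l) ^ 2| = (1 + l) ^ 2 := abs_of_nonneg (by positivity)
    rw [h2]
    have h3 : M ≤ |M| := le_abs_self M
    nlinarith [abs_nonneg (A (v + l)), abs_nonneg (g (x' + l)),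
      mul_nonneg (sq_nonneg (1 + l)) (abs_nonneg (A (v + l)))]
  · exact ((airy_I2 hAc hInt v).const_mul M).abs
  · filter_upwards with l
    intro x' _
    have h1 : HasDerivAt (fun w => f (w + l)) (g (x' + l)) x' := by
      have := (hfg (x' + l)).comp x' ((hasDerivAt_id x').add_const l)
      simpa [Function.comp_def] using this
    simpa using h1.mul_const (A (v + l))

private lemma airy_ball_facts {u x' l : ℝ} (hx' : x' ∈ Metric.ball u 1) (hl : 0 < l) :
    u - 1 ≤ x' + l ∧ |x' + l| ≤ |u| + 1 + l := by
  rw [Metric.mem_ball, Real.dist_eq, abs_sub_lt_iff] at hx'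
  have h1 : |x'| ≤ |u| + 1 := by
    have h2 : |x'| - |u| ≤ |x' - u| := abs_sub_abs_le_abs_sub x' u
    have h3 : |x' - u| ≤ 1 := by
      rw [abs_sub_le_iff]
      exact ⟨hx'.1.le, by linarith [hx'.2]⟩
    linarith
  refine ⟨by linarith [hx'.1, hx'.2], ?_⟩
  calc |x' + l| ≤ |x'| + |l| := abs_add_le x' l
  _ ≤ |u| + 1 + l := by rw [abs_of_pos hl]; linarith

private lemma airy_arith1 {a l Ca Cb : ℝ} (ha : 0 ≤ a) (hl : 0 < l) (hCa : 1 ≤ Ca)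
    (hCb : 1 ≤ Cb) : Ca + (a + 1 + l) * Cb ≤ 2 * (a + 2) * (Ca + Cb) * (1 + l) ^ 2 := by
  nlinarith [mul_nonneg ha hl.le, mul_nonneg (mul_nonneg ha hl.le) hl.le, sq_nonneg l,
    mul_nonneg ha (sq_nonneg l), mul_le_mul hCa (le_refl ((1+l)^2)) (sq_nonneg _) (by linarith),
    mul_nonneg (mul_nonneg ha (by linarith : (0:ℝ) ≤ Cb)) hl.le,
    mul_nonneg (mul_nonneg ha (by linarith : (0:ℝ) ≤ Ca)) hl.le,
    mul_nonneg (by linarith : (0:ℝ) ≤ Cb) (sq_nonneg l),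
    mul_nonneg (by linarith : (0:ℝ) ≤ Ca) (sq_nonneg l)]

private lemma airy_arith2 {a l Ca Cb : ℝ} (ha : 0 ≤ a) (hl : 0 < l) (hCa : 1 ≤ Ca)
    (hCb : 1 ≤ Cb) : (a + 1 + l) * Ca ≤ (a + 2) * (Ca + Cb) * (1 + l) ^ 2 := by
  nlinarith [mul_nonneg (mul_nonneg ha (by linarith : (0:ℝ) ≤ Ca)) hl.le,
    mul_nonneg ha (by linarith : (0:ℝ) ≤ Cb),
    mul_nonneg (by linarith : (0:ℝ) ≤ Ca) (sq_nonneg l),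
    mul_nonneg (by linarith : (0:ℝ) ≤ Cb) (sq_nonneg l),
    mul_nonneg (mul_nonneg ha (by linarith : (0:ℝ) ≤ Ca)) (sq_nonneg l),
    mul_nonneg (mul_nonneg ha (by linarith : (0:ℝ) ≤ Cb)) (sq_nonneg l),
    mul_nonneg ha (by linarith : (0:ℝ) ≤ Ca), mul_nonneg (by linarith : (0:ℝ) ≤ Cb) hl.le,
    mul_nonneg (by linarith : (0:ℝ) ≤ Ca) hl.le]

private lemma airy_arith3 {a l Ca Cb : ℝ} (ha : 0 ≤ a) (hl : 0 < l) (hCa : 1 ≤ Ca)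
    (hCb : 1 ≤ Cb) :
    2 * Cb + ((a + 2) * (1 + l)) ^ 2 * Ca ≤ 3 * (a + 2) ^ 2 * (Ca + Cb) * (1 + l) ^ 2 := by
  have h1 : (4:ℝ) ≤ (a+2)^2 := by nlinarith
  have h2 : (1:ℝ) ≤ (1+l)^2 := by nlinarith
  have hX : (4:ℝ) ≤ (a+2)^2*(1+l)^2 := by
    nlinarith [mul_le_mul h1 h2 (by norm_num) (by positivity)]
  have hY : (0:ℝ) ≤ 2*Ca+3*Cb := by linarith
  nlinarith [mul_le_mul_of_nonneg_right hX hY]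

private lemma airy_arith4 {a l Ca Cb : ℝ} (ha : 0 ≤ a) (hl : 0 < l) (hCa : 1 ≤ Ca)
    (hCb : 1 ≤ Cb) : Ca + (a + 1 + l) * Cb ≤ 3 * (a + 2) ^ 2 * (Ca + Cb) * (1 + l) ^ 2 := by
  nlinarith [mul_nonneg (mul_nonneg ha (by linarith : (0:ℝ) ≤ Cb)) hl.le,
    mul_nonneg (by linarith : (0:ℝ) ≤ Cb) (sq_nonneg l),
    mul_nonneg (by linarith : (0:ℝ) ≤ Ca) (sq_nonneg l),
    mul_nonneg ha (by linarith : (0:ℝ) ≤ Cb),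
    mul_nonneg (sq_nonneg a) (by linarith : (0:ℝ) ≤ Ca),
    mul_nonneg (sq_nonneg a) (by linarith : (0:ℝ) ≤ Cb),
    mul_nonneg (mul_nonneg (sq_nonneg a) (by linarith : (0:ℝ) ≤ Cb)) (sq_nonneg l),
    mul_nonneg (by linarith : (0:ℝ) ≤ Cb) hl.le, mul_nonneg ha (by linarith : (0:ℝ) ≤ Ca)]


private lemma airy_step0 {A : ℝ → ℝ} (hAc : Continuous A) (hBc : Continuous (deriv A))
    (hdA : ∀ t : ℝ, HasDerivAt A (deriv A t) t)
    (hInt : ∀ (c : ℝ) (n : ℕ),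
      IntegrableOn (fun z => z ^ n * Real.exp (c * z) * A z) (Ioi 0))
    (hLimA : Tendsto A atTop (nhds 0)) (hLimB : Tendsto (deriv A) atTop (nhds 0))
    (u v : ℝ) :
    IntegrableOn (fun l => deriv A (u + l) * A (v + l)) (Ioi 0) ∧
    HasDerivAt (fun u' => ∫ l in Ioi (0:ℝ), A (u' + l) * A (v + l))
      (∫ l in Ioi (0:ℝ), deriv A (u + l) * A (v + l)) u := by
  obtain ⟨Ca, hCa1, hCa⟩ := airy_bdd hAc hLimA (u - 1)
  obtain ⟨Cb, hCb1, hCb⟩ := airy_bdd hBc hLimB (u - 1)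
  refine airy_param_deriv (f := A) (g := deriv A) (M := Ca + Cb) hAc hInt u v hAc hBc hdA
    (fun l hl => ?_) (fun x' l hx' hl => ?_)
  · have h1 := hCa (u + l) (by linarith)
    nlinarith [sq_nonneg l]
  · obtain ⟨hf1, hf2⟩ := airy_ball_facts hx' hl
    have h1 := hCb (x' + l) hf1
    nlinarith [sq_nonneg l]

private lemma airy_step1 {A : ℝ → ℝ} (hAc : Continuous A) (hBc : Continuous (deriv A))
    (hdB : ∀ t : ℝ, HasDerivAt (deriv A) (t * A t) t)
    (hInt : ∀ (c : ℝ) (n : ℕ),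
      IntegrableOn (fun z => z ^ n * Real.exp (c * z) * A z) (Ioi 0))
    (hLimA : Tendsto A atTop (nhds 0)) (hLimB : Tendsto (deriv A) atTop (nhds 0))
    (u v : ℝ) :
    IntegrableOn (fun l => ((u + l) * A (u + l)) * A (v + l)) (Ioi 0) ∧
    HasDerivAt (fun u' => ∫ l in Ioi (0:ℝ), deriv A (u' + l) * A (v + l))
      (∫ l in Ioi (0:ℝ), ((u + l) * A (u + l)) * A (v + l)) u := by
  obtain ⟨Ca, hCa1, hCa⟩ := airy_bdd hAc hLimA (u - 1)
  obtain ⟨Cb, hCb1, hCb⟩ := airy_bdd hBc hLimB (u - 1)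
  refine airy_param_deriv (f := deriv A) (g := fun t => t * A t) (M := (|u| + 2) * (Ca + Cb)) hAc hInt u v hBc
    (continuous_id.mul hAc) hdB (fun l hl => ?_) (fun x' l hx' hl => ?_)
  · have h1 := hCb (u + l) (by linarith)
    have hx1 : (1:ℝ) ≤ (1+l)^2 := by nlinarith
    have hx2 : Cb ≤ (|u|+2)*(Ca+Cb) := by nlinarith [abs_nonneg u]
    have hx3 : (0:ℝ) ≤ (|u|+2)*(Ca+Cb) := by nlinarith [abs_nonneg u]
    calc |deriv A (u + l)| ≤ Cb := h1
    _ = Cb * 1 := (mul_one _).symm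
    _ ≤ ((|u|+2)*(Ca+Cb)) * (1+l)^2 := mul_le_mul hx2 hx1 zero_le_one hx3
  · obtain ⟨hf1, hf2⟩ := airy_ball_facts hx' hl
    have h1 := hCa (x' + l) hf1
    rw [abs_mul]
    have h2 : |x' + l| * |A (x' + l)| ≤ (|u| + 1 + l) * Ca := by
      have := abs_nonneg (A (x' + l))
      have := abs_nonneg (x' + l)
      nlinarith
    refine h2.trans ?_
    have := airy_arith2 (abs_nonneg u) hl hCa1 hCb1
    nlinarith [sq_nonneg l, abs_nonneg u, mul_nonneg (by linarith : (0:ℝ) ≤ Cb) (sq_nonneg (1+l)),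
      mul_nonneg (by linarith : (0:ℝ) ≤ Ca) (sq_nonneg (1+l)),
      mul_nonneg (mul_nonneg (abs_nonneg u) (by linarith : (0:ℝ) ≤ Ca + Cb)) (sq_nonneg (1+l))]

private lemma airy_step2 {A : ℝ → ℝ} (hAc : Continuous A) (hBc : Continuous (deriv A))
    (hdA : ∀ t : ℝ, HasDerivAt A (deriv A t) t)
    (hInt : ∀ (c : ℝ) (n : ℕ),
      IntegrableOn (fun z => z ^ n * Real.exp (c * z) * A z) (Ioi 0))
    (hLimA : Tendsto A atTop (nhds 0)) (hLimB : Tendsto (deriv A) atTop (nhds 0))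
    (u v : ℝ) :
    IntegrableOn (fun l => (A (u + l) + (u + l) * deriv A (u + l)) * A (v + l)) (Ioi 0) ∧
    HasDerivAt (fun u' => ∫ l in Ioi (0:ℝ), ((u' + l) * A (u' + l)) * A (v + l))
      (∫ l in Ioi (0:ℝ), (A (u + l) + (u + l) * deriv A (u + l)) * A (v + l)) u := by
  obtain ⟨Ca, hCa1, hCa⟩ := airy_bdd hAc hLimA (u - 1)
  obtain ⟨Cb, hCb1, hCb⟩ := airy_bdd hBc hLimB (u - 1)
  have hd : ∀ t : ℝ, HasDerivAt (fun t => t * A t) (A t + t * deriv A t) t := by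
    intro t
    have : HasDerivAt (fun t => t * A t) _ t := (hasDerivAt_id t).mul (hdA t)
    convert this using 1
    simp only [id_eq, one_mul]
    try ring
  refine airy_param_deriv (f := fun t => t * A t) (g := fun t => A t + t * deriv A t) (M := 2 * (|u| + 2) * (Ca + Cb)) hAc hInt u v
    (continuous_id.mul hAc) (hAc.add (continuous_id.mul hBc)) hd
    (fun l hl => ?_) (fun x' l hx' hl => ?_)
  · have h1 := hCa (u + l) (by linarith)
    rw [abs_mul]
    have h2 : |u + l| ≤ |u| + 1 + l := by
      calc |u + l| ≤ |u| + |l| := abs_add_le u l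
      _ ≤ |u| + 1 + l := by rw [abs_of_pos hl]; linarith
    have h3 : |u + l| * |A (u + l)| ≤ (|u| + 1 + l) * Ca := by
      have := abs_nonneg (A (u + l))
      have := abs_nonneg (u + l)
      nlinarith
    refine h3.trans ?_
    have h4 := airy_arith2 (abs_nonneg u) hl hCa1 hCb1
    nlinarith [mul_nonneg (mul_nonneg (by positivity : (0:ℝ) ≤ |u| + 2)
      (by linarith : (0:ℝ) ≤ Ca + Cb)) (sq_nonneg (1+l))]
  · obtain ⟨hf1, hf2⟩ := airy_ball_facts hx' hl
    have h1 := hCa (x' + l) hf1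
    have h2 := hCb (x' + l) hf1
    calc |A (x' + l) + (x' + l) * deriv A (x' + l)|
        ≤ |A (x' + l)| + |x' + l| * |deriv A (x' + l)| := by
          rw [← abs_mul]; exact abs_add_le _ _
    _ ≤ Ca + (|u| + 1 + l) * Cb := by
          have := abs_nonneg (deriv A (x' + l))
          have := abs_nonneg (x' + l)
          nlinarith
    _ ≤ 2 * (|u| + 2) * (Ca + Cb) * (1 + l) ^ 2 :=
          airy_arith1 (abs_nonneg u) hl hCa1 hCb1

private lemma airy_step3 {A : ℝ → ℝ} (hAc : Continuous A) (hBc : Continuous (deriv A))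
    (hdA : ∀ t : ℝ, HasDerivAt A (deriv A t) t)
    (hdB : ∀ t : ℝ, HasDerivAt (deriv A) (t * A t) t)
    (hInt : ∀ (c : ℝ) (n : ℕ),
      IntegrableOn (fun z => z ^ n * Real.exp (c * z) * A z) (Ioi 0))
    (hLimA : Tendsto A atTop (nhds 0)) (hLimB : Tendsto (deriv A) atTop (nhds 0))
    (u v : ℝ) :
    IntegrableOn (fun l => (2 * deriv A (u + l) + (u + l) ^ 2 * A (u + l)) * A (v + l)) (Ioi 0) ∧
    HasDerivAt (fun u' => ∫ l in Ioi (0:ℝ), (A (u' + l) + (u' + l) * deriv A (u' + l)) * A (v + l))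
      (∫ l in Ioi (0:ℝ), (2 * deriv A (u + l) + (u + l) ^ 2 * A (u + l)) * A (v + l)) u := by
  obtain ⟨Ca, hCa1, hCa⟩ := airy_bdd hAc hLimA (u - 1)
  obtain ⟨Cb, hCb1, hCb⟩ := airy_bdd hBc hLimB (u - 1)
  have hd : ∀ t : ℝ, HasDerivAt (fun t => A t + t * deriv A t)
      (2 * deriv A t + t ^ 2 * A t) t := by
    intro t
    have : HasDerivAt (fun t => A t + t * deriv A t) _ t := (hdA t).add ((hasDerivAt_id t).mul (hdB t))
    convert this using 1
    simp only [id_eq, one_mul]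
    try ring
  refine airy_param_deriv (f := fun t => A t + t * deriv A t) (g := fun t => 2 * deriv A t + t ^ 2 * A t) (M := 3 * (|u| + 2) ^ 2 * (Ca + Cb)) hAc hInt u v
    (hAc.add (continuous_id.mul hBc))
    ((continuous_const.mul hBc).add ((continuous_pow 2).mul hAc)) hd
    (fun l hl => ?_) (fun x' l hx' hl => ?_)
  · have h1 := hCa (u + l) (by linarith)
    have h2 := hCb (u + l) (by linarith)
    have h3 : |u + l| ≤ |u| + 1 + l := by
      calc |u + l| ≤ |u| + |l| := abs_add_le u l
      _ ≤ |u| + 1 + l := by rw [abs_of_pos hl]; linarith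
    calc |A (u + l) + (u + l) * deriv A (u + l)|
        ≤ |A (u + l)| + |u + l| * |deriv A (u + l)| := by
          rw [← abs_mul]; exact abs_add_le _ _
    _ ≤ Ca + (|u| + 1 + l) * Cb := by
          have := abs_nonneg (deriv A (u + l))
          have := abs_nonneg (u + l)
          nlinarith
    _ ≤ 3 * (|u| + 2) ^ 2 * (Ca + Cb) * (1 + l) ^ 2 :=
          airy_arith4 (abs_nonneg u) hl hCa1 hCb1
  · obtain ⟨hf1, hf2⟩ := airy_ball_facts hx' hl
    have h1 := hCa (x' + l) hf1
    have h2 := hCb (x' + l) hf1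
    have h3 : |x' + l| ^ 2 ≤ ((|u| + 2) * (1 + l)) ^ 2 := by
      have h4 : |x' + l| ≤ (|u| + 2) * (1 + l) := by nlinarith [abs_nonneg u]
      have := abs_nonneg (x' + l)
      nlinarith
    calc |2 * deriv A (x' + l) + (x' + l) ^ 2 * A (x' + l)|
        ≤ 2 * |deriv A (x' + l)| + |x' + l| ^ 2 * |A (x' + l)| := by
          rw [← abs_pow, ← abs_mul]
          refine (abs_add_le _ _).trans ?_
          rw [abs_mul]
          simp [abs_of_nonneg]
    _ ≤ 2 * Cb + ((|u| + 2) * (1 + l)) ^ 2 * Ca := by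
          have := abs_nonneg (A (x' + l))
          have h6 : (0:ℝ) ≤ |x' + l| ^ 2 := by positivity
          nlinarith
    _ ≤ 3 * (|u| + 2) ^ 2 * (Ca + Cb) * (1 + l) ^ 2 :=
          airy_arith3 (abs_nonneg u) hl hCa1 hCb1

theorem airy_kernel_fourth_deriv_identity
    (A : ℝ → ℝ) (hA : ContDiff ℝ (⊤ : ℕ∞) A)
    (hAiry : ∀ x : ℝ, deriv (deriv A) x = x * A x)
    (hInt : ∀ (c : ℝ) (n : ℕ),
      IntegrableOn (fun z => z ^ n * Real.exp (c * z) * A z) (Ioi 0))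
    (hInt' : ∀ (c : ℝ) (n : ℕ),
      IntegrableOn (fun z => z ^ n * Real.exp (c * z) * deriv A z) (Ioi 0))
    (hLim : ∀ (c : ℝ) (n : ℕ),
      Tendsto (fun z => z ^ n * Real.exp (c * z) * A z) atTop (nhds 0))
    (hLim' : ∀ (c : ℝ) (n : ℕ),
      Tendsto (fun z => z ^ n * Real.exp (c * z) * deriv A z) atTop (nhds 0))
    (K : ℝ → ℝ → ℝ)
    (hK : ∀ x y : ℝ, K x y = ∫ l in Ioi (0:ℝ), A (x + l) * A (y + l))
    (x y : ℝ) :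
    iteratedDeriv 4 (fun x' => K x' y) x - iteratedDeriv 4 (fun y' => K x y') y
      = (x ^ 2 - y ^ 2) * K x y := by
  have hAc : Continuous A := hA.continuous
  have hBc : Continuous (deriv A) := hA.continuous_deriv (by simp)
  have hdA : ∀ t : ℝ, HasDerivAt A (deriv A t) t :=
    fun t => (hA.differentiable (by simp) t).hasDerivAt
  have hAinf : ContDiff ℝ (⊤ : ℕ∞) A := hA.of_le (by simp)
  have hAd : Differentiable ℝ (deriv A) :=
    (contDiff_infty_iff_deriv.mp hAinf).2.differentiable (by simp)
  have hdB : ∀ t : ℝ, HasDerivAt (deriv A) (t * A t) t := by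
    intro t
    have h := (hAd t).hasDerivAt
    rwa [hAiry t] at h
  have hLimA : Tendsto A atTop (nhds 0) := by simpa using hLim 0 0
  have hLimB : Tendsto (deriv A) atTop (nhds 0) := by simpa using hLim' 0 0
  have s : ∀ (n : ℕ) (f : ℝ → ℝ), iteratedDeriv (n + 1) f = iteratedDeriv n (deriv f) :=
    fun n f => iteratedDeriv_succ'
  -- main iterated derivative computation
  have main : ∀ u v : ℝ,
      iteratedDeriv 4 (fun u' => ∫ l in Ioi (0:ℝ), A (u' + l) * A (v + l)) u
        = ∫ l in Ioi (0:ℝ), (2 * deriv A (u + l) + (u + l) ^ 2 * A (u + l)) * A (v + l) := by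
    intro u v
    have e0 : deriv (fun u' => ∫ l in Ioi (0:ℝ), A (u' + l) * A (v + l))
        = fun u' => ∫ l in Ioi (0:ℝ), deriv A (u' + l) * A (v + l) :=
      funext fun w => ((airy_step0 hAc hBc hdA hInt hLimA hLimB w v).2).deriv
    have e1 : deriv (fun u' => ∫ l in Ioi (0:ℝ), deriv A (u' + l) * A (v + l))
        = fun u' => ∫ l in Ioi (0:ℝ), ((u' + l) * A (u' + l)) * A (v + l) :=
      funext fun w => ((airy_step1 hAc hBc hdB hInt hLimA hLimB w v).2).deriv
    have e2 : deriv (fun u' => ∫ l in Ioi (0:ℝ), ((u' + l) * A (u' + l)) * A (v + l))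
        = fun u' => ∫ l in Ioi (0:ℝ), (A (u' + l) + (u' + l) * deriv A (u' + l)) * A (v + l) :=
      funext fun w => ((airy_step2 hAc hBc hdA hInt hLimA hLimB w v).2).deriv
    have e3 : deriv (fun u' => ∫ l in Ioi (0:ℝ), (A (u' + l) + (u' + l) * deriv A (u' + l)) * A (v + l))
        = fun u' => ∫ l in Ioi (0:ℝ), (2 * deriv A (u' + l) + (u' + l) ^ 2 * A (u' + l)) * A (v + l) :=
      funext fun w => ((airy_step3 hAc hBc hdA hdB hInt hLimA hLimB w v).2).deriv
    have t4 : iteratedDeriv 4 (fun u' => ∫ l in Ioi (0:ℝ), A (u' + l) * A (v + l)) u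
        = iteratedDeriv 3 (deriv (fun u' => ∫ l in Ioi (0:ℝ), A (u' + l) * A (v + l))) u :=
      congrFun (s 3 _) u
    rw [e0] at t4
    have t3 : iteratedDeriv 3 (fun u' => ∫ l in Ioi (0:ℝ), deriv A (u' + l) * A (v + l)) u
        = iteratedDeriv 2 (deriv (fun u' => ∫ l in Ioi (0:ℝ), deriv A (u' + l) * A (v + l))) u :=
      congrFun (s 2 _) u
    rw [e1] at t3
    have t2 : iteratedDeriv 2 (fun u' => ∫ l in Ioi (0:ℝ), ((u' + l) * A (u' + l)) * A (v + l)) u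
        = iteratedDeriv 1 (deriv (fun u' => ∫ l in Ioi (0:ℝ), ((u' + l) * A (u' + l)) * A (v + l))) u :=
      congrFun (s 1 _) u
    rw [e2] at t2
    have t1 : iteratedDeriv 1 (fun u' => ∫ l in Ioi (0:ℝ), (A (u' + l) + (u' + l) * deriv A (u' + l)) * A (v + l)) u
        = iteratedDeriv 0 (deriv (fun u' => ∫ l in Ioi (0:ℝ), (A (u' + l) + (u' + l) * deriv A (u' + l)) * A (v + l))) u :=
      congrFun (s 0 _) u
    rw [e3] at t1
    rw [t4, t3, t2, t1, iteratedDeriv_zero]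
  -- the x-side and y-side fourth derivatives
  have ex : iteratedDeriv 4 (fun x' => K x' y) x
      = ∫ l in Ioi (0:ℝ), (2 * deriv A (x + l) + (x + l) ^ 2 * A (x + l)) * A (y + l) := by
    have e : (fun x' => K x' y) = fun x' => ∫ l in Ioi (0:ℝ), A (x' + l) * A (y + l) :=
      funext fun x' => hK x' y
    rw [e]; exact main x y
  have ey : iteratedDeriv 4 (fun y' => K x y') y
      = ∫ l in Ioi (0:ℝ), (2 * deriv A (y + l) + (y + l) ^ 2 * A (y + l)) * A (x + l) := by
    have e : (fun y' => K x y') = fun y' => ∫ l in Ioi (0:ℝ), A (y' + l) * A (x + l) := by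
      funext y'
      rw [hK]
      have h : (fun l => A (x + l) * A (y' + l)) = fun l => A (y' + l) * A (x + l) := by
        funext l; ring
      rw [h]
    rw [e]; exact main y x
  -- integrability facts
  have I_a := (airy_step3 hAc hBc hdA hdB hInt hLimA hLimB x y).1
  have I_b := (airy_step3 hAc hBc hdA hdB hInt hLimA hLimB y x).1
  have I_p1 := (airy_step0 hAc hBc hdA hInt hLimA hLimB x y).1
  have I_p2 : IntegrableOn (fun l => A (x + l) * deriv A (y + l)) (Ioi 0) := by
    have h := (airy_step0 hAc hBc hdA hInt hLimA hLimB y x).1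
    refine MeasureTheory.IntegrableOn.congr_fun h (fun l _ => ?_) measurableSet_Ioi
    exact mul_comm _ _
  obtain ⟨Ca, hCa1, hCa⟩ := airy_bdd hAc hLimA x
  have I_c : IntegrableOn (fun l => A (x + l) * A (y + l)) (Ioi 0) := by
    refine airy_dom_int (M := Ca) hAc hInt y
      ((hAc.comp (continuous_const.add continuous_id)).mul
        (hAc.comp (continuous_const.add continuous_id))) (fun l hl => ?_)
    rw [abs_mul]
    have h1 := hCa (x + l) (by linarith)
    have h2 : (1:ℝ) ≤ (1 + l) ^ 2 := by nlinarith
    nlinarith [abs_nonneg (A (y + l)), abs_nonneg (A (x + l)),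
      mul_nonneg (by linarith : (0:ℝ) ≤ Ca) (abs_nonneg (A (y + l))),
      mul_nonneg (mul_nonneg (by linarith : (0:ℝ) ≤ Ca) (abs_nonneg (A (y + l))))
        (by nlinarith : (0:ℝ) ≤ (1 + l) ^ 2 - 1)]
  have I_p3 : IntegrableOn (fun l => l * ((x - y) * (A (x + l) * A (y + l)))) (Ioi 0) := by
    refine airy_dom_int (M := (|x - y| + 1) * Ca) hAc hInt y
      (continuous_id.mul (continuous_const.mul
        ((hAc.comp (continuous_const.add continuous_id)).mul
          (hAc.comp (continuous_const.add continuous_id))))) (fun l hl => ?_)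
    rw [abs_mul, abs_mul, abs_mul, abs_of_pos hl]
    have h1 := hCa (x + l) (by linarith)
    have h2 : l ≤ (1 + l) ^ 2 := by nlinarith
    have h3 : |x - y| ≤ |x - y| + 1 := by linarith
    have hAy := abs_nonneg (A (y + l))
    have hAx := abs_nonneg (A (x + l))
    have hxy := abs_nonneg (x - y)
    nlinarith [mul_nonneg (mul_nonneg hxy hAx) hAy,
      mul_nonneg (mul_nonneg (by linarith : (0:ℝ) ≤ Ca) hAy) (sq_nonneg (1 + l)),
      mul_nonneg (mul_nonneg (mul_nonneg hxy (by linarith : (0:ℝ) ≤ Ca)) hAy) (sq_nonneg (1 + l)),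
      mul_nonneg (mul_nonneg hxy hAy) (by linarith : (0:ℝ) ≤ Ca),
      mul_le_mul (mul_le_mul h3 h1 hAx (by linarith)) h2 hl.le
        (mul_nonneg (by linarith) (by linarith)),
      mul_nonneg (mul_nonneg hxy hAy) hl.le]
  -- FTC part
  have hAxd : ∀ w l : ℝ, HasDerivAt (fun l => A (w + l)) (deriv A (w + l)) l := by
    intro w l
    have := (hdA (w + l)).comp l ((hasDerivAt_id l).const_add w)
    simpa [Function.comp_def] using this
  have hBxd : ∀ w l : ℝ, HasDerivAt (fun l => deriv A (w + l)) ((w + l) * A (w + l)) l := by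
    intro w l
    have := (hdB (w + l)).comp l ((hasDerivAt_id l).const_add w)
    simpa [Function.comp_def] using this
  have hg' : ∀ l : ℝ, HasDerivAt
      (fun l => l * (deriv A (x + l) * A (y + l) - A (x + l) * deriv A (y + l)))
      ((deriv A (x + l) * A (y + l) - A (x + l) * deriv A (y + l))
        + l * ((x - y) * (A (x + l) * A (y + l)))) l := by
    intro l
    have hg : HasDerivAt (fun l => deriv A (x + l) * A (y + l) - A (x + l) * deriv A (y + l))
        ((((x + l) * A (x + l)) * A (y + l) + deriv A (x + l) * deriv A (y + l))
          - (deriv A (x + l) * deriv A (y + l) + A (x + l) * ((y + l) * A (y + l)))) l :=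
      ((hBxd x l).mul (hAxd y l)).sub ((hAxd x l).mul (hBxd y l))
    have : HasDerivAt (fun l => l * (deriv A (x + l) * A (y + l) - A (x + l) * deriv A (y + l))) _ l :=
      (hasDerivAt_id l).mul hg
    convert this using 1
    simp only [id_eq, one_mul]
    ring
  have hint : IntegrableOn (fun l =>
      (deriv A (x + l) * A (y + l) - A (x + l) * deriv A (y + l))
        + l * ((x - y) * (A (x + l) * A (y + l)))) (Ioi 0) :=
    (I_p1.sub I_p2).add I_p3
  have tA : ∀ w : ℝ, Tendsto (fun l => A (w + l)) atTop (nhds 0) :=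
    fun w => hLimA.comp (tendsto_atTop_add_const_left atTop w tendsto_id)
  have tB : ∀ w : ℝ, Tendsto (fun l => deriv A (w + l)) atTop (nhds 0) :=
    fun w => hLimB.comp (tendsto_atTop_add_const_left atTop w tendsto_id)
  have tlA : ∀ w : ℝ, Tendsto (fun l => l * A (w + l)) atTop (nhds 0) := by
    intro w
    have h0 : Tendsto (fun z => z * A z) atTop (nhds 0) := by simpa using hLim 0 1
    have h1 : Tendsto (fun l => (w + l) * A (w + l)) atTop (nhds 0) :=
      h0.comp (tendsto_atTop_add_const_left atTop w tendsto_id)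
    have h2 := (tA w).const_mul w
    have h3 := h1.sub h2
    have h4 : (fun l => l * A (w + l)) = fun l => (w + l) * A (w + l) - w * A (w + l) := by
      funext l; ring
    rw [h4]
    simpa using h3
  have htend : Tendsto
      (fun l => l * (deriv A (x + l) * A (y + l) - A (x + l) * deriv A (y + l)))
      atTop (nhds 0) := by
    have h : (fun l => l * (deriv A (x + l) * A (y + l) - A (x + l) * deriv A (y + l)))
        = fun l => (l * A (y + l)) * deriv A (x + l) - (l * A (x + l)) * deriv A (y + l) := by
      funext l; ring
    rw [h]
    have := ((tlA y).mul (tB x)).sub ((tlA x).mul (tB y))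
    simpa using this
  have hcont : ContinuousWithinAt
      (fun l => l * (deriv A (x + l) * A (y + l) - A (x + l) * deriv A (y + l))) (Ici 0) 0 := by
    refine Continuous.continuousWithinAt ?_
    exact continuous_id.mul (((hBc.comp (continuous_const.add continuous_id)).mul
      (hAc.comp (continuous_const.add continuous_id))).sub
      ((hAc.comp (continuous_const.add continuous_id)).mul
        (hBc.comp (continuous_const.add continuous_id))))
  have hzero : (∫ l in Ioi (0:ℝ),
      ((deriv A (x + l) * A (y + l) - A (x + l) * deriv A (y + l))
        + l * ((x - y) * (A (x + l) * A (y + l))))) = 0 := by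
    have := integral_Ioi_of_hasDerivAt_of_tendsto hcont (fun l _ => hg' l) hint htend
    simpa using this
  -- final computation
  rw [ex, ey, ← integral_sub I_a I_b]
  have hptwise : (fun l => (2 * deriv A (x + l) + (x + l) ^ 2 * A (x + l)) * A (y + l)
        - (2 * deriv A (y + l) + (y + l) ^ 2 * A (y + l)) * A (x + l))
      = fun l => (x ^ 2 - y ^ 2) * (A (x + l) * A (y + l))
        + 2 * ((deriv A (x + l) * A (y + l) - A (x + l) * deriv A (y + l))
          + l * ((x - y) * (A (x + l) * A (y + l)))) := by
    funext l; ring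
  rw [hptwise, integral_add (I_c.const_mul _) (hint.const_mul 2),
    integral_const_mul, integral_const_mul, hzero, hK]
  ring
end

section
/- For all s, x, y ∈ ℝ, the Airy kernel satisfies the identity (Ψ(x,s;−∂x) − Ψ(y,s;∂y) + 4s)K(x,y) = ¼(x−y)(x+y+6s²)·K(x,y), where the left-hand side in expanded form reads ¼(∂x⁴K − ∂y⁴K)(x,y) + (3/2)s²(∂x²K − ∂y²K)(x,y) + 4s·(K(x,y) + x·∂xK(x,y) + y·∂yK(x,y) − ∂x³K(x,y) − ∂y³K(x,y)), with ∂x and ∂y denoting partial differentiation in the first and second argument respectively. -/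
open MeasureTheory Real Filter Set


lemma shiftIoi (f : ℝ → ℝ) (x : ℝ) (h : IntegrableOn f (Ioi x)) :
    IntegrableOn (fun l => f (x + l)) (Ioi 0) := by
  have h1 := (measurePreserving_add_left (volume : Measure ℝ) x).integrableOn_comp_preimage
      (MeasurableEquiv.addLeft x).measurableEmbedding (f := f) (s := Ioi x)
  have hs : (fun z : ℝ => x + z) ⁻¹' (Ioi x) = Ioi 0 := by ext z; simp [mem_Ioi]
  have h2 := h1.2 h
  rw [hs] at h2
  exact h2

lemma bddOnIci (f : ℝ → ℝ) (hf : Continuous f) (h0 : Tendsto f atTop (nhds 0)) (a : ℝ) :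
    ∃ M : ℝ, 0 < M ∧ ∀ z, a ≤ z → |f z| ≤ M := by
  obtain ⟨R, hR⟩ := Metric.tendsto_atTop.mp h0 1 one_pos
  obtain ⟨C, hC⟩ := (isCompact_Icc (a := a) (b := R)).exists_bound_of_continuousOn hf.continuousOn
  have hmax : (1:ℝ) ≤ max C 1 := le_max_right C 1
  refine ⟨max C 1 + 1, by linarith, fun z hz => ?_⟩
  rcases le_total z R with h | h
  · have h2 := hC z ⟨hz, h⟩
    rw [Real.norm_eq_abs] at h2
    have := le_max_left C 1; linarith
  · have h2 := hR z h
    rw [Real.dist_eq, sub_zero] at h2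
    linarith

lemma intOnIoi (u : ℝ → ℝ) (hu : Continuous u)
    (hI : ∀ n : ℕ, IntegrableOn (fun z => z ^ n * u z) (Ioi 0)) (k : ℕ) (a : ℝ) :
    IntegrableOn (fun z => z ^ k * u z) (Ioi a) := by
  have h1 : IntegrableOn (fun z => z ^ k * u z) (Ioc a 0) :=
    Continuous.integrableOn_Ioc (by continuity)
  exact (h1.union (hI k)).mono_set fun z hz => by
    rcases le_or_gt z 0 with h | h
    · exact Or.inl ⟨hz, h⟩
    · exact Or.inr h

lemma shiftMono (u : ℝ → ℝ) (hu : Continuous u)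
    (hI : ∀ n : ℕ, IntegrableOn (fun z => z ^ n * u z) (Ioi 0)) (x : ℝ) (n : ℕ) :
    IntegrableOn (fun l => l ^ n * u (x + l)) (Ioi 0) := by
  have key : ∀ k : ℕ, IntegrableOn (fun l => (x + l) ^ k * u (x + l)) (Ioi 0) :=
    fun k => shiftIoi (fun z => z ^ k * u z) x (intOnIoi u hu hI k x)
  have he : (fun l : ℝ => l ^ n * u (x + l)) =
      fun l => ∑ k ∈ Finset.range (n + 1),
        ((-x) ^ (n - k) * (n.choose k : ℝ)) * ((x + l) ^ k * u (x + l)) := by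
    funext l
    have h1 : l ^ n = ((x + l) + (-x)) ^ n := by ring_nf
    rw [h1, add_pow, Finset.sum_mul]
    exact Finset.sum_congr rfl fun k _ => by ring
  rw [he]
  exact integrable_finset_sum _ fun k _ => ((key k).const_mul _)

lemma prodInt (u v : ℝ → ℝ) (hu : Continuous u) (hv : Continuous v)
    (hIu : ∀ n : ℕ, IntegrableOn (fun z => z ^ n * u z) (Ioi 0))
    (hv0 : Tendsto v atTop (nhds 0)) (x y : ℝ) (n : ℕ) :
    IntegrableOn (fun l => l ^ n * u (x + l) * v (y + l)) (Ioi 0) := by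
  obtain ⟨M, hM0, hMb⟩ := bddOnIci v hv hv0 y
  have base := ((shiftMono u hu hIu x n).norm.const_mul M)
  refine Integrable.mono' base ((Continuous.aestronglyMeasurable (by continuity)).restrict) ?_
  refine (ae_restrict_iff' measurableSet_Ioi).2 (Filter.Eventually.of_forall fun l hl => ?_)
  have h1 : |v (y + l)| ≤ M := hMb _ (by have := mem_Ioi.mp hl; linarith)
  have h2 : ‖l ^ n * u (x + l) * v (y + l)‖ = ‖l ^ n * u (x + l)‖ * |v (y + l)| := by
    rw [Real.norm_eq_abs, Real.norm_eq_abs, abs_mul]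
  rw [h2, mul_comm M]
  exact mul_le_mul_of_nonneg_left h1 (norm_nonneg _)

lemma tendZero (u v : ℝ → ℝ) (hu : Tendsto u atTop (nhds 0)) (hv : Tendsto v atTop (nhds 0))
    (x y : ℝ) : Tendsto (fun l => u (x + l) * v (y + l)) atTop (nhds 0) := by
  have h1 : Tendsto (fun l : ℝ => x + l) atTop atTop :=
    tendsto_atTop_add_const_left _ x tendsto_id
  have h2 : Tendsto (fun l : ℝ => y + l) atTop atTop :=
    tendsto_atTop_add_const_left _ y tendsto_id
  have := (hu.comp h1).mul (hv.comp h2)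
  simpa using this

lemma ftcIoi (f f' : ℝ → ℝ) (hd : ∀ z, HasDerivAt f (f' z) z)
    (hi : IntegrableOn f' (Ioi 0)) (hl : Tendsto f atTop (nhds 0)) :
    ∫ l in Ioi 0, f' l = - f 0 := by
  have := integral_Ioi_of_hasDerivAt_of_tendsto (a := 0) (f := f) (f' := f')
    (hd 0).continuousAt.continuousWithinAt (fun z _ => hd z) hi hl
  simpa using this

lemma hasDerivParam (W u u' : ℝ → ℝ) (hu : ∀ z, HasDerivAt u (u' z) z)
    (huc : Continuous u) (hu'c : Continuous u') (hWc : Continuous W)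
    (bound : ℝ → ℝ) (x₀ : ℝ)
    (hbnd : ∀ l ∈ Ioi (0:ℝ), ∀ t ∈ Metric.ball x₀ 1, |u' (t + l) * W l| ≤ bound l)
    (hbint : IntegrableOn bound (Ioi 0))
    (hint : IntegrableOn (fun l => u (x₀ + l) * W l) (Ioi 0)) :
    HasDerivAt (fun t => ∫ l in Ioi 0, u (t + l) * W l)
      (∫ l in Ioi 0, u' (x₀ + l) * W l) x₀ := by
  have key := hasDerivAt_integral_of_dominated_loc_of_deriv_le (μ := volume.restrict (Ioi 0))
    (F := fun t l => u (t + l) * W l) (F' := fun t l => u' (t + l) * W l)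
    (bound := bound) (x₀ := x₀) (Metric.ball_mem_nhds x₀ one_pos)
    (Filter.Eventually.of_forall fun t =>
      (Continuous.aestronglyMeasurable (by continuity)).restrict)
    hint
    ((Continuous.aestronglyMeasurable (by continuity)).restrict)
    ((ae_restrict_iff' measurableSet_Ioi).2 (Filter.Eventually.of_forall fun l hl t ht => by
      rw [Real.norm_eq_abs]; exact hbnd l hl t ht))
    hbint
    ((ae_restrict_iff' measurableSet_Ioi).2 (Filter.Eventually.of_forall fun l hl t ht => by
      have h1 : HasDerivAt (fun t : ℝ => u (t + l)) (u' (t + l)) t := by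
        have := (hu (t + l)).comp t ((hasDerivAt_id t).add_const l)
        simpa [Function.comp_def] using this
      simpa using h1.mul_const (W l)))
  exact key.2

theorem airy_kernel_Psi_identity
    (A : ℝ → ℝ) (hA : ContDiff ℝ (⊤ : ℕ∞) A)
    (hAiry : ∀ x : ℝ, deriv (deriv A) x = x * A x)
    (hInt : ∀ (c : ℝ) (n : ℕ),
      IntegrableOn (fun z => z ^ n * Real.exp (c * z) * A z) (Ioi 0))
    (hInt' : ∀ (c : ℝ) (n : ℕ),
      IntegrableOn (fun z => z ^ n * Real.exp (c * z) * deriv A z) (Ioi 0))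
    (hLim : ∀ (c : ℝ) (n : ℕ),
      Tendsto (fun z => z ^ n * Real.exp (c * z) * A z) atTop (nhds 0))
    (hLim' : ∀ (c : ℝ) (n : ℕ),
      Tendsto (fun z => z ^ n * Real.exp (c * z) * deriv A z) atTop (nhds 0))
    (K : ℝ → ℝ → ℝ)
    (hK : ∀ x y : ℝ, K x y = ∫ l in Ioi (0:ℝ), A (x + l) * A (y + l))
    (s x y : ℝ) :
    (1/4) * (iteratedDeriv 4 (fun x' => K x' y) x - iteratedDeriv 4 (fun y' => K x y') y)
      + (3/2) * s ^ 2 *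
        (iteratedDeriv 2 (fun x' => K x' y) x - iteratedDeriv 2 (fun y' => K x y') y)
      + 4 * s * (K x y + x * deriv (fun x' => K x' y) x + y * deriv (fun y' => K x y') y
          - iteratedDeriv 3 (fun x' => K x' y) x - iteratedDeriv 3 (fun y' => K x y') y)
      = (1/4) * (x - y) * (x + y + 6 * s ^ 2) * K x y := by
  -- basic facts about A
  have hAc : Continuous A := hA.continuous
  have hdiff : Differentiable ℝ A := hA.differentiable (by simp)
  have hd1 : ∀ z : ℝ, HasDerivAt A (deriv A z) z := fun z => (hdiff z).hasDerivAt
  have hA' : ContDiff ℝ ((⊤:ℕ∞) : WithTop ℕ∞) (deriv A) := (contDiff_infty_iff_deriv.mp (hA.of_le (by simp))).2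
  have hA'c : Continuous (deriv A) := hA'.continuous
  have hd2 : ∀ z : ℝ, HasDerivAt (deriv A) (z * A z) z := fun z => by
    have h := ((hA'.differentiable (by simp)) z).hasDerivAt
    rwa [hAiry z] at h
  have hd3 : ∀ z : ℝ, HasDerivAt (fun w => w * A w) (A z + z * deriv A z) z := fun z => by
    have h := (hasDerivAt_id' z).mul (hd1 z)
    simp only [Pi.mul_def, Pi.add_def, Pi.sub_def] at h; exact h.congr_deriv (by ring)
  have hd4 : ∀ z : ℝ, HasDerivAt (fun w => A w + w * deriv A w)
      (2 * deriv A z + z ^ 2 * A z) z := fun z => by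
    have h := (hd1 z).add ((hasDerivAt_id' z).mul (hd2 z))
    simp only [Pi.mul_def, Pi.add_def, Pi.sub_def] at h; exact h.congr_deriv (by ring)
  have hIA : ∀ n : ℕ, IntegrableOn (fun z => z ^ n * A z) (Ioi 0) := fun n => by
    have h := hInt 0 n; simpa using h
  have hIA' : ∀ n : ℕ, IntegrableOn (fun z => z ^ n * deriv A z) (Ioi 0) := fun n => by
    have h := hInt' 0 n; simpa using h
  have hLA : Tendsto A atTop (nhds 0) := by have h := hLim 0 0; simpa using h
  have hLA' : Tendsto (deriv A) atTop (nhds 0) := by have h := hLim' 0 0; simpa using h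
  have hLzA : Tendsto (fun z => z * A z) atTop (nhds 0) := by
    have h := hLim 0 1; simpa using h
  have hLzA' : Tendsto (fun z => z * deriv A z) atTop (nhds 0) := by
    have h := hLim' 0 1; simpa using h
  -- pointwise bounds for the derivative families
  have bndB1 : ∀ z : ℝ, |deriv A z| ≤ (2 + |z|) ^ 2 * (|A z| + |deriv A z|) := fun z => by
    nlinarith [abs_nonneg z, abs_nonneg (A z), abs_nonneg (deriv A z), sq_nonneg (|z|)]
  have bndB2 : ∀ z : ℝ, |z * A z| ≤ (2 + |z|) ^ 2 * (|A z| + |deriv A z|) := fun z => by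
    rw [abs_mul]
    nlinarith [abs_nonneg z, abs_nonneg (A z), abs_nonneg (deriv A z), sq_nonneg (|z|)]
  have bndB3 : ∀ z : ℝ, |A z + z * deriv A z| ≤ (2 + |z|) ^ 2 * (|A z| + |deriv A z|) :=
    fun z => by
    have h := abs_add_le (A z) (z * deriv A z)
    rw [abs_mul] at h
    nlinarith [abs_nonneg z, abs_nonneg (A z), abs_nonneg (deriv A z), sq_nonneg (|z|)]
  have bndB4 : ∀ z : ℝ, |2 * deriv A z + z ^ 2 * A z| ≤
      (2 + |z|) ^ 2 * (|A z| + |deriv A z|) := fun z => by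
    have h := abs_add_le (2 * deriv A z) (z ^ 2 * A z)
    rw [abs_mul, abs_mul, abs_pow, abs_two] at h
    nlinarith [abs_nonneg z, abs_nonneg (A z), abs_nonneg (deriv A z), sq_nonneg (|z|)]
  -- differentiation under the integral sign
  have deriv_step : ∀ W : ℝ → ℝ, Continuous W →
      (∀ n : ℕ, IntegrableOn (fun l => l ^ n * |W l|) (Ioi 0)) →
      ∀ u u' : ℝ → ℝ, (∀ z, HasDerivAt u (u' z) z) → Continuous u → Continuous u' →
      (∀ z : ℝ, |u' z| ≤ (2 + |z|) ^ 2 * (|A z| + |deriv A z|)) →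
      ∀ x₀ : ℝ, IntegrableOn (fun l => u (x₀ + l) * W l) (Ioi 0) →
      HasDerivAt (fun t => ∫ l in Ioi 0, u (t + l) * W l)
        (∫ l in Ioi 0, u' (x₀ + l) * W l) x₀ := by
    intro W hWc hWint u u' hu huc hu'c hu'b x₀ hint
    obtain ⟨M, hM0, hMA⟩ := bddOnIci A hAc hLA (x₀ - 1)
    obtain ⟨M', hM'0, hMA'⟩ := bddOnIci (deriv A) hA'c hLA' (x₀ - 1)
    refine hasDerivParam W u u' hu huc hu'c hWc
      (fun l => ((3 + |x₀|) ^ 2 * (M + M')) * ((1 + l) ^ 2 * |W l|)) x₀ ?_ ?_ hint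
    · intro l hl t ht
      have hl0 : 0 < l := hl
      have ht1 : |t - x₀| < 1 := by rw [← Real.dist_eq]; exact ht
      have h3 := abs_lt.mp ht1
      have hz1 : x₀ - 1 ≤ t + l := by linarith
      have habs : |t + l| ≤ |x₀| + 1 + l := by
        rw [abs_le]
        constructor <;> nlinarith [le_abs_self x₀, neg_abs_le x₀]
      have h4 : (2 + |t + l|) ≤ (3 + |x₀|) * (1 + l) := by
        nlinarith [abs_nonneg x₀]
      have key : |u' (t + l)| ≤ ((3 + |x₀|) ^ 2 * (M + M')) * (1 + l) ^ 2 := by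
        calc |u' (t + l)| ≤ (2 + |t + l|) ^ 2 * (|A (t + l)| + |deriv A (t + l)|) :=
              hu'b (t + l)
          _ ≤ ((3 + |x₀|) * (1 + l)) ^ 2 * (M + M') := by
              have h5 : (2 + |t + l|) ^ 2 ≤ ((3 + |x₀|) * (1 + l)) ^ 2 :=
                pow_le_pow_left₀ (by positivity) h4 2
              have h6 : |A (t + l)| + |deriv A (t + l)| ≤ M + M' :=
                add_le_add (hMA _ hz1) (hMA' _ hz1)
              exact mul_le_mul h5 h6 (by positivity) (by positivity)
          _ = ((3 + |x₀|) ^ 2 * (M + M')) * (1 + l) ^ 2 := by ring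
      calc |u' (t + l) * W l| = |u' (t + l)| * |W l| := abs_mul _ _
        _ ≤ (((3 + |x₀|) ^ 2 * (M + M')) * (1 + l) ^ 2) * |W l| :=
            mul_le_mul_of_nonneg_right key (abs_nonneg _)
        _ = ((3 + |x₀|) ^ 2 * (M + M')) * ((1 + l) ^ 2 * |W l|) := by ring
    · refine Integrable.const_mul ?_ _
      have he : (fun l : ℝ => (1 + l) ^ 2 * |W l|) =
          fun l => (l ^ 0 * |W l| + 2 * (l ^ 1 * |W l|)) + l ^ 2 * |W l| := by
        funext l; ring
      rw [he]
      exact ((hWint 0).add ((hWint 1).const_mul 2)).add (hWint 2)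
  -- integrability of the basis integrands
  have iAA0 : IntegrableOn (fun l => A (x + l) * A (y + l)) (Ioi 0) := by
    simpa using prodInt A A hAc hAc hIA hLA x y 0
  have iAA1 : IntegrableOn (fun l => l * A (x + l) * A (y + l)) (Ioi 0) := by
    simpa using prodInt A A hAc hAc hIA hLA x y 1
  have iAA2 : IntegrableOn (fun l => l ^ 2 * A (x + l) * A (y + l)) (Ioi 0) :=
    prodInt A A hAc hAc hIA hLA x y 2
  have iA'A0 : IntegrableOn (fun l => deriv A (x + l) * A (y + l)) (Ioi 0) := by
    simpa using prodInt (deriv A) A hA'c hAc hIA' hLA x y 0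
  have iA'A1 : IntegrableOn (fun l => l * deriv A (x + l) * A (y + l)) (Ioi 0) := by
    simpa using prodInt (deriv A) A hA'c hAc hIA' hLA x y 1
  have iAA'0 : IntegrableOn (fun l => A (x + l) * deriv A (y + l)) (Ioi 0) := by
    simpa using prodInt A (deriv A) hAc hA'c hIA hLA' x y 0
  have iAA'1 : IntegrableOn (fun l => l * A (x + l) * deriv A (y + l)) (Ioi 0) := by
    simpa using prodInt A (deriv A) hAc hA'c hIA hLA' x y 1
  -- generic integrability of u(a+l)*v(b+l)
  have hint0 : ∀ u v : ℝ → ℝ, Continuous u → Continuous v →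
      (∀ n : ℕ, IntegrableOn (fun z => z ^ n * u z) (Ioi 0)) →
      Tendsto v atTop (nhds 0) → ∀ a b : ℝ,
      IntegrableOn (fun l => u (a + l) * v (b + l)) (Ioi 0) :=
    fun u v hu hv hI h0 a b => by simpa using prodInt u v hu hv hI h0 a b 0
  have hint1 : ∀ u v : ℝ → ℝ, Continuous u → Continuous v →
      (∀ n : ℕ, IntegrableOn (fun z => z ^ n * u z) (Ioi 0)) →
      Tendsto v atTop (nhds 0) → ∀ a b : ℝ,
      IntegrableOn (fun l => l * u (a + l) * v (b + l)) (Ioi 0) :=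
    fun u v hu hv hI h0 a b => by simpa using prodInt u v hu hv hI h0 a b 1
  have hintB2 : ∀ v : ℝ → ℝ, Continuous v → Tendsto v atTop (nhds 0) → ∀ a b : ℝ,
      IntegrableOn (fun l => (a + l) * A (a + l) * v (b + l)) (Ioi 0) := by
    intro v hv h0 a b
    have he : (fun l : ℝ => (a + l) * A (a + l) * v (b + l)) =
        fun l => a * (A (a + l) * v (b + l)) + l * A (a + l) * v (b + l) := by
      funext l; ring
    rw [he]
    exact ((hint0 A v hAc hv hIA h0 a b).const_mul a).add (hint1 A v hAc hv hIA h0 a b)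
  have hintB3 : ∀ v : ℝ → ℝ, Continuous v → Tendsto v atTop (nhds 0) → ∀ a b : ℝ,
      IntegrableOn (fun l => (A (a + l) + (a + l) * deriv A (a + l)) * v (b + l)) (Ioi 0) := by
    intro v hv h0 a b
    have he : (fun l : ℝ => (A (a + l) + (a + l) * deriv A (a + l)) * v (b + l)) =
        fun l => A (a + l) * v (b + l) +
          (a * (deriv A (a + l) * v (b + l)) + l * deriv A (a + l) * v (b + l)) := by
      funext l; ring
    rw [he]
    exact (hint0 A v hAc hv hIA h0 a b).add
      (((hint0 (deriv A) v hA'c hv hIA' h0 a b).const_mul a).add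
        (hint1 (deriv A) v hA'c hv hIA' h0 a b))
  -- the |W| integrability for W = A (y + ·) and W = A (x + ·)
  have hWabs : ∀ b : ℝ, ∀ n : ℕ, IntegrableOn (fun l => l ^ n * |A (b + l)|) (Ioi 0) := by
    intro b n
    have h1 : IntegrableOn (fun l => |l ^ n * A (b + l)|) (Ioi 0) := (shiftMono A hAc hIA b n).abs
    refine IntegrableOn.congr_fun h1 (fun l hl => ?_) measurableSet_Ioi
    rw [abs_mul, abs_pow, abs_of_nonneg (le_of_lt hl)]
  -- continuity of auxiliary functions
  have hB2c : Continuous (fun w : ℝ => w * A w) := continuous_id.mul hAc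
  have hB3c : Continuous (fun w : ℝ => A w + w * deriv A w) :=
    hAc.add (continuous_id.mul hA'c)
  have hB4c : Continuous (fun w : ℝ => 2 * deriv A w + w ^ 2 * A w) :=
    (continuous_const.mul hA'c).add ((continuous_pow 2).mul hAc)
  have hWyc : Continuous (fun l : ℝ => A (y + l)) := hAc.comp (continuous_const.add continuous_id)
  have hWxc : Continuous (fun l : ℝ => A (x + l)) := hAc.comp (continuous_const.add continuous_id)
  -- the x-derivative chain
  have dx1 : deriv (fun t => ∫ l in Ioi 0, A (t + l) * A (y + l)) =
      fun t => ∫ l in Ioi 0, deriv A (t + l) * A (y + l) := by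
    funext t
    exact (deriv_step (fun l => A (y + l)) hWyc (hWabs y)
      A (deriv A) hd1 hAc hA'c bndB1 t (hint0 A A hAc hAc hIA hLA t y)).deriv
  have dx2 : deriv (fun t => ∫ l in Ioi 0, deriv A (t + l) * A (y + l)) =
      fun t => ∫ l in Ioi 0, (t + l) * A (t + l) * A (y + l) := by
    funext t
    exact (deriv_step (fun l => A (y + l)) hWyc (hWabs y)
      (deriv A) (fun w => w * A w) hd2 hA'c hB2c bndB2 t
      (hint0 (deriv A) A hA'c hAc hIA' hLA t y)).deriv
  have dx3 : deriv (fun t => ∫ l in Ioi 0, (t + l) * A (t + l) * A (y + l)) =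
      fun t => ∫ l in Ioi 0, (A (t + l) + (t + l) * deriv A (t + l)) * A (y + l) := by
    funext t
    exact (deriv_step (fun l => A (y + l)) hWyc (hWabs y)
      (fun w => w * A w) (fun w => A w + w * deriv A w) hd3 hB2c hB3c bndB3 t
      (hintB2 A hAc hLA t y)).deriv
  have dx4 : deriv (fun t => ∫ l in Ioi 0, (A (t + l) + (t + l) * deriv A (t + l)) * A (y + l)) =
      fun t => ∫ l in Ioi 0, (2 * deriv A (t + l) + (t + l) ^ 2 * A (t + l)) * A (y + l) := by
    funext t
    exact (deriv_step (fun l => A (y + l)) hWyc (hWabs y)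
      (fun w => A w + w * deriv A w) (fun w => 2 * deriv A w + w ^ 2 * A w) hd4 hB3c hB4c
      bndB4 t (hintB3 A hAc hLA t y)).deriv
  -- the y-derivative chain
  have dy1 : deriv (fun t => ∫ l in Ioi 0, A (t + l) * A (x + l)) =
      fun t => ∫ l in Ioi 0, deriv A (t + l) * A (x + l) := by
    funext t
    exact (deriv_step (fun l => A (x + l)) hWxc (hWabs x)
      A (deriv A) hd1 hAc hA'c bndB1 t (hint0 A A hAc hAc hIA hLA t x)).deriv
  have dy2 : deriv (fun t => ∫ l in Ioi 0, deriv A (t + l) * A (x + l)) =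
      fun t => ∫ l in Ioi 0, (t + l) * A (t + l) * A (x + l) := by
    funext t
    exact (deriv_step (fun l => A (x + l)) hWxc (hWabs x)
      (deriv A) (fun w => w * A w) hd2 hA'c hB2c bndB2 t
      (hint0 (deriv A) A hA'c hAc hIA' hLA t x)).deriv
  have dy3 : deriv (fun t => ∫ l in Ioi 0, (t + l) * A (t + l) * A (x + l)) =
      fun t => ∫ l in Ioi 0, (A (t + l) + (t + l) * deriv A (t + l)) * A (x + l) := by
    funext t
    exact (deriv_step (fun l => A (x + l)) hWxc (hWabs x)
      (fun w => w * A w) (fun w => A w + w * deriv A w) hd3 hB2c hB3c bndB3 t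
      (hintB2 A hAc hLA t x)).deriv
  have dy4 : deriv (fun t => ∫ l in Ioi 0, (A (t + l) + (t + l) * deriv A (t + l)) * A (x + l)) =
      fun t => ∫ l in Ioi 0, (2 * deriv A (t + l) + (t + l) ^ 2 * A (t + l)) * A (x + l) := by
    funext t
    exact (deriv_step (fun l => A (x + l)) hWxc (hWabs x)
      (fun w => A w + w * deriv A w) (fun w => 2 * deriv A w + w ^ 2 * A w) hd4 hB3c hB4c
      bndB4 t (hintB3 A hAc hLA t x)).deriv
  -- rewrite K slices
  have hFx : (fun x' => K x' y) = fun t => ∫ l in Ioi 0, A (t + l) * A (y + l) :=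
    funext fun t => hK t y
  have hFy : (fun y' => K x y') = fun t => ∫ l in Ioi 0, A (t + l) * A (x + l) := by
    funext t
    rw [hK x t]
    congr 1
    funext l
    ring
  have it2 : ∀ f : ℝ → ℝ, iteratedDeriv 2 f = deriv (deriv f) := fun f => by
    rw [show (2:ℕ) = 1 + 1 from rfl, iteratedDeriv_succ, iteratedDeriv_one]
  have it3 : ∀ f : ℝ → ℝ, iteratedDeriv 3 f = deriv (deriv (deriv f)) := fun f => by
    rw [show (3:ℕ) = 2 + 1 from rfl, iteratedDeriv_succ, it2]
  have it4 : ∀ f : ℝ → ℝ, iteratedDeriv 4 f = deriv (deriv (deriv (deriv f))) := fun f => by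
    rw [show (4:ℕ) = 3 + 1 from rfl, iteratedDeriv_succ, it3]
  -- evaluated derivative formulas
  have hx1 : deriv (fun x' => K x' y) x = ∫ l in Ioi 0, deriv A (x + l) * A (y + l) := by
    rw [hFx, dx1]
  have hx2 : iteratedDeriv 2 (fun x' => K x' y) x =
      ∫ l in Ioi 0, (x + l) * A (x + l) * A (y + l) := by
    rw [it2, hFx, dx1, dx2]
  have hx3 : iteratedDeriv 3 (fun x' => K x' y) x =
      ∫ l in Ioi 0, (A (x + l) + (x + l) * deriv A (x + l)) * A (y + l) := by
    rw [it3, hFx, dx1, dx2, dx3]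
  have hx4 : iteratedDeriv 4 (fun x' => K x' y) x =
      ∫ l in Ioi 0, (2 * deriv A (x + l) + (x + l) ^ 2 * A (x + l)) * A (y + l) := by
    rw [it4, hFx, dx1, dx2, dx3, dx4]
  have hy1 : deriv (fun y' => K x y') y = ∫ l in Ioi 0, deriv A (y + l) * A (x + l) := by
    rw [hFy, dy1]
  have hy2 : iteratedDeriv 2 (fun y' => K x y') y =
      ∫ l in Ioi 0, (y + l) * A (y + l) * A (x + l) := by
    rw [it2, hFy, dy1, dy2]
  have hy3 : iteratedDeriv 3 (fun y' => K x y') y =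
      ∫ l in Ioi 0, (A (y + l) + (y + l) * deriv A (y + l)) * A (x + l) := by
    rw [it3, hFy, dy1, dy2, dy3]
  have hy4 : iteratedDeriv 4 (fun y' => K x y') y =
      ∫ l in Ioi 0, (2 * deriv A (y + l) + (y + l) ^ 2 * A (y + l)) * A (x + l) := by
    rw [it4, hFy, dy1, dy2, dy3, dy4]
  -- derivatives of shifted functions
  have hsx : ∀ a z : ℝ, HasDerivAt (fun l => A (a + l)) (deriv A (a + z)) z := fun a z => by
    have h := (hd1 (a + z)).comp z ((hasDerivAt_id z).const_add a)
    simpa [Function.comp_def] using h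
  have hsx' : ∀ a z : ℝ, HasDerivAt (fun l => deriv A (a + l)) ((a + z) * A (a + z)) z :=
    fun a z => by
    have h := (hd2 (a + z)).comp z ((hasDerivAt_id z).const_add a)
    simpa [Function.comp_def] using h
  -- integration by parts identity E2
  have hE2 : (∫ l in Ioi 0, A (x + l) * A (y + l)) +
      ((∫ l in Ioi 0, l * deriv A (x + l) * A (y + l)) +
       (∫ l in Ioi 0, l * A (x + l) * deriv A (y + l))) = 0 := by
    have hd : ∀ z : ℝ, HasDerivAt (fun l => l * (A (x + l) * A (y + l)))
        (A (x + z) * A (y + z) +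
          (z * deriv A (x + z) * A (y + z) + z * A (x + z) * deriv A (y + z))) z := by
      intro z
      have h := (hasDerivAt_id' z).mul ((hsx x z).mul (hsx y z))
      simp only [Pi.mul_def, Pi.add_def, Pi.sub_def] at h; exact h.congr_deriv (by ring)
    have i1 : IntegrableOn (fun l => l * deriv A (x + l) * A (y + l) +
        l * A (x + l) * deriv A (y + l)) (Ioi 0) := iA'A1.add iAA'1
    have hintf : IntegrableOn (fun l => A (x + l) * A (y + l) +
        (l * deriv A (x + l) * A (y + l) + l * A (x + l) * deriv A (y + l))) (Ioi 0) :=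
      iAA0.add i1
    have h0 : Tendsto (fun l => l * (A (x + l) * A (y + l))) atTop (nhds 0) := by
      have t1 := tendZero (fun z => z * A z) A hLzA hLA x y
      have t2 := (tendZero A A hLA hLA x y).const_mul x
      have t3 : Tendsto (fun l => (x + l) * A (x + l) * A (y + l) -
          x * (A (x + l) * A (y + l))) atTop (nhds 0) := by
        simpa using t1.sub t2
      exact Tendsto.congr (fun l => by ring) t3
    have hval := ftcIoi (fun l => l * (A (x + l) * A (y + l))) _ hd hintf h0
    simp only [zero_mul, neg_zero] at hval
    rw [integral_add iAA0 i1, integral_add iA'A1 iAA'1] at hval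
    linarith [hval]
  -- integration by parts identity E3
  have hE3 : ((∫ l in Ioi 0, deriv A (x + l) * A (y + l)) -
       (∫ l in Ioi 0, A (x + l) * deriv A (y + l))) +
      (x - y) * (∫ l in Ioi 0, l * A (x + l) * A (y + l)) = 0 := by
    have hd : ∀ z : ℝ, HasDerivAt
        (fun l => l * (deriv A (x + l) * A (y + l) - A (x + l) * deriv A (y + l)))
        ((deriv A (x + z) * A (y + z) - A (x + z) * deriv A (y + z)) +
          (x - y) * (z * A (x + z) * A (y + z))) z := by
      intro z
      have h := (hasDerivAt_id' z).mul
        (((hsx' x z).mul (hsx y z)).sub ((hsx x z).mul (hsx' y z)))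
      simp only [Pi.mul_def, Pi.add_def, Pi.sub_def] at h; exact h.congr_deriv (by ring)
    have i1 : IntegrableOn (fun l =>
        deriv A (x + l) * A (y + l) - A (x + l) * deriv A (y + l)) (Ioi 0) := iA'A0.sub iAA'0
    have i2 : IntegrableOn (fun l =>
        (x - y) * (l * A (x + l) * A (y + l))) (Ioi 0) := iAA1.const_mul (x - y)
    have hintf : IntegrableOn (fun l =>
        (deriv A (x + l) * A (y + l) - A (x + l) * deriv A (y + l)) +
          (x - y) * (l * A (x + l) * A (y + l))) (Ioi 0) := i1.add i2
    have h0 : Tendsto (fun l => l * (deriv A (x + l) * A (y + l) -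
        A (x + l) * deriv A (y + l))) atTop (nhds 0) := by
      have t1 := tendZero (fun z => z * deriv A z) A hLzA' hLA x y
      have t2 := (tendZero (deriv A) A hLA' hLA x y).const_mul x
      have t3 := tendZero (fun z => z * A z) (deriv A) hLzA hLA' x y
      have t4 := (tendZero A (deriv A) hLA hLA' x y).const_mul x
      have t5 : Tendsto (fun l =>
          ((x + l) * deriv A (x + l) * A (y + l) - x * (deriv A (x + l) * A (y + l))) -
          ((x + l) * A (x + l) * deriv A (y + l) - x * (A (x + l) * deriv A (y + l))))
          atTop (nhds 0) := by
        simpa using (t1.sub t2).sub (t3.sub t4)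
      exact Tendsto.congr (fun l => by ring) t5
    have hval := ftcIoi _ _ hd hintf h0
    simp only [zero_mul, neg_zero] at hval
    rw [integral_add i1 i2, integral_sub iA'A0 iAA'0, integral_const_mul] at hval
    linarith [hval]
  -- expansions of the derivative integrals into basis integrals
  have ex2 : (∫ l in Ioi 0, (x + l) * A (x + l) * A (y + l)) =
      x * (∫ l in Ioi 0, A (x + l) * A (y + l)) +
        (∫ l in Ioi 0, l * A (x + l) * A (y + l)) := by
    have he : (fun l : ℝ => (x + l) * A (x + l) * A (y + l)) =
        fun l => x * (A (x + l) * A (y + l)) + l * A (x + l) * A (y + l) := by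
      funext l; ring
    rw [he, integral_add (iAA0.const_mul x) iAA1, integral_const_mul]
  have ey2 : (∫ l in Ioi 0, (y + l) * A (y + l) * A (x + l)) =
      y * (∫ l in Ioi 0, A (x + l) * A (y + l)) +
        (∫ l in Ioi 0, l * A (x + l) * A (y + l)) := by
    have he : (fun l : ℝ => (y + l) * A (y + l) * A (x + l)) =
        fun l => y * (A (x + l) * A (y + l)) + l * A (x + l) * A (y + l) := by
      funext l; ring
    rw [he, integral_add (iAA0.const_mul y) iAA1, integral_const_mul]
  have ex3 : (∫ l in Ioi 0, (A (x + l) + (x + l) * deriv A (x + l)) * A (y + l)) =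
      (∫ l in Ioi 0, A (x + l) * A (y + l)) +
        (x * (∫ l in Ioi 0, deriv A (x + l) * A (y + l)) +
          (∫ l in Ioi 0, l * deriv A (x + l) * A (y + l))) := by
    have he : (fun l : ℝ => (A (x + l) + (x + l) * deriv A (x + l)) * A (y + l)) =
        fun l => A (x + l) * A (y + l) +
          (x * (deriv A (x + l) * A (y + l)) + l * deriv A (x + l) * A (y + l)) := by
      funext l; ring
    have i1 : IntegrableOn (fun l => x * (deriv A (x + l) * A (y + l)) +
        l * deriv A (x + l) * A (y + l)) (Ioi 0) := (iA'A0.const_mul x).add iA'A1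
    rw [he, integral_add iAA0 i1, integral_add (iA'A0.const_mul x) iA'A1, integral_const_mul]
  have ey3 : (∫ l in Ioi 0, (A (y + l) + (y + l) * deriv A (y + l)) * A (x + l)) =
      (∫ l in Ioi 0, A (x + l) * A (y + l)) +
        (y * (∫ l in Ioi 0, A (x + l) * deriv A (y + l)) +
          (∫ l in Ioi 0, l * A (x + l) * deriv A (y + l))) := by
    have he : (fun l : ℝ => (A (y + l) + (y + l) * deriv A (y + l)) * A (x + l)) =
        fun l => A (x + l) * A (y + l) +
          (y * (A (x + l) * deriv A (y + l)) + l * A (x + l) * deriv A (y + l)) := by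
      funext l; ring
    have i1 : IntegrableOn (fun l => y * (A (x + l) * deriv A (y + l)) +
        l * A (x + l) * deriv A (y + l)) (Ioi 0) := (iAA'0.const_mul y).add iAA'1
    rw [he, integral_add iAA0 i1, integral_add (iAA'0.const_mul y) iAA'1, integral_const_mul]
  have ex4 : (∫ l in Ioi 0, (2 * deriv A (x + l) + (x + l) ^ 2 * A (x + l)) * A (y + l)) =
      2 * (∫ l in Ioi 0, deriv A (x + l) * A (y + l)) +
        (x ^ 2 * (∫ l in Ioi 0, A (x + l) * A (y + l)) +
          ((2 * x) * (∫ l in Ioi 0, l * A (x + l) * A (y + l)) +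
            (∫ l in Ioi 0, l ^ 2 * A (x + l) * A (y + l)))) := by
    have he : (fun l : ℝ => (2 * deriv A (x + l) + (x + l) ^ 2 * A (x + l)) * A (y + l)) =
        fun l => 2 * (deriv A (x + l) * A (y + l)) +
          (x ^ 2 * (A (x + l) * A (y + l)) +
            ((2 * x) * (l * A (x + l) * A (y + l)) + l ^ 2 * A (x + l) * A (y + l))) := by
      funext l; ring
    have i1 : IntegrableOn (fun l => (2 * x) * (l * A (x + l) * A (y + l)) +
        l ^ 2 * A (x + l) * A (y + l)) (Ioi 0) := (iAA1.const_mul (2 * x)).add iAA2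
    have i2 : IntegrableOn (fun l => x ^ 2 * (A (x + l) * A (y + l)) +
        ((2 * x) * (l * A (x + l) * A (y + l)) + l ^ 2 * A (x + l) * A (y + l))) (Ioi 0) :=
      (iAA0.const_mul (x ^ 2)).add i1
    rw [he, integral_add (iA'A0.const_mul 2) i2,
      integral_add (iAA0.const_mul (x ^ 2)) i1,
      integral_add (iAA1.const_mul (2 * x)) iAA2,
      integral_const_mul, integral_const_mul, integral_const_mul]
  have ey4 : (∫ l in Ioi 0, (2 * deriv A (y + l) + (y + l) ^ 2 * A (y + l)) * A (x + l)) =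
      2 * (∫ l in Ioi 0, A (x + l) * deriv A (y + l)) +
        (y ^ 2 * (∫ l in Ioi 0, A (x + l) * A (y + l)) +
          ((2 * y) * (∫ l in Ioi 0, l * A (x + l) * A (y + l)) +
            (∫ l in Ioi 0, l ^ 2 * A (x + l) * A (y + l)))) := by
    have he : (fun l : ℝ => (2 * deriv A (y + l) + (y + l) ^ 2 * A (y + l)) * A (x + l)) =
        fun l => 2 * (A (x + l) * deriv A (y + l)) +
          (y ^ 2 * (A (x + l) * A (y + l)) +
            ((2 * y) * (l * A (x + l) * A (y + l)) + l ^ 2 * A (x + l) * A (y + l))) := by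
      funext l; ring
    have i1 : IntegrableOn (fun l => (2 * y) * (l * A (x + l) * A (y + l)) +
        l ^ 2 * A (x + l) * A (y + l)) (Ioi 0) := (iAA1.const_mul (2 * y)).add iAA2
    have i2 : IntegrableOn (fun l => y ^ 2 * (A (x + l) * A (y + l)) +
        ((2 * y) * (l * A (x + l) * A (y + l)) + l ^ 2 * A (x + l) * A (y + l))) (Ioi 0) :=
      (iAA0.const_mul (y ^ 2)).add i1
    rw [he, integral_add (iAA'0.const_mul 2) i2,
      integral_add (iAA0.const_mul (y ^ 2)) i1,
      integral_add (iAA1.const_mul (2 * y)) iAA2,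
      integral_const_mul, integral_const_mul, integral_const_mul]
  have hy1' : deriv (fun y' => K x y') y = ∫ l in Ioi 0, A (x + l) * deriv A (y + l) := by
    rw [hy1]; congr 1; funext l; ring
  rw [hx1, hy1', hx2, hy2, hx3, hy3, hx4, hy4, hK x y, ex2, ey2, ex3, ey3, ex4, ey4]
  linear_combination (1/2) * hE3 - (4*s) * hE2
end

section
/- For all s, x, y ∈ ℝ, the following integration-by-parts identity holds: ∫₀^∞ e^{−2sz}·K(x+z, y+z) dz = ∫₀^∞ z·e^{−2sz}·A(x+z)·A(y+z) dz + 2s·∫₀^∞ z·e^{−2sz}·K(x+z, y+z) dz. -/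
open MeasureTheory Real Filter Set

set_option maxHeartbeats 1000000

private lemma aux_me (a : ℝ) : MeasurableEmbedding (fun u : ℝ => u + a) :=
  (Homeomorph.addRight a).isClosedEmbedding.measurableEmbedding

lemma aux_setIntegral_comp_add (g : ℝ → ℝ) (a t : ℝ) :
    ∫ u in Ioi t, g (u + a) = ∫ u in Ioi (t + a), g u := by
  have A := aux_me a
  have h1 : (fun u : ℝ => u + a) ⁻¹' Ioi (t + a) = Ioi t := by
    ext u; simp
  rw [← h1, ← A.setIntegral_map g (Ioi (t + a)), map_add_right_eq_self]

lemma aux_integrableOn_comp_add (g : ℝ → ℝ) (a t : ℝ)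
    (h : IntegrableOn g (Ioi (t + a))) :
    IntegrableOn (fun u => g (u + a)) (Ioi t) := by
  have A := aux_me a
  have h1 : (fun u : ℝ => u + a) ⁻¹' Ioi (t + a) = Ioi t := by
    ext u; simp
  rw [← map_add_right_eq_self volume a] at h
  have := A.integrableOn_map_iff.mp h
  rwa [h1] at this

lemma aux_bdd_of_tendsto {g : ℝ → ℝ} (hg : Continuous g)
    (h : Tendsto g atTop (nhds 0)) :
    ∃ C : ℝ, 0 ≤ C ∧ ∀ u : ℝ, 0 ≤ u → |g u| ≤ C := by
  have h1 : ∀ᶠ u in atTop, |g u| < 1 := by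
    have := h.abs
    rw [abs_zero] at this
    exact this.eventually_lt_const one_pos
  obtain ⟨T, hT⟩ := eventually_atTop.mp h1
  obtain ⟨C, hC⟩ := (isCompact_Icc (a := (0:ℝ)) (b := T)).exists_bound_of_continuousOn
    hg.continuousOn
  refine ⟨max C 1, le_trans zero_le_one (le_max_right _ _), fun u hu => ?_⟩
  rcases le_or_gt u T with h'|h'
  · simpa using le_trans (hC u ⟨hu, h'⟩) (le_max_left _ _)
  · exact le_trans (hT u h'.le).le (le_max_right _ _)

theorem airy_kernel_integration_by_parts
    (A : ℝ → ℝ) (hA : ContDiff ℝ (⊤ : ℕ∞) A)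
    (hAiry : ∀ x : ℝ, deriv (deriv A) x = x * A x)
    (hInt : ∀ (c : ℝ) (n : ℕ),
      IntegrableOn (fun z => z ^ n * Real.exp (c * z) * A z) (Ioi 0))
    (hInt' : ∀ (c : ℝ) (n : ℕ),
      IntegrableOn (fun z => z ^ n * Real.exp (c * z) * deriv A z) (Ioi 0))
    (hLim : ∀ (c : ℝ) (n : ℕ),
      Tendsto (fun z => z ^ n * Real.exp (c * z) * A z) atTop (nhds 0))
    (hLim' : ∀ (c : ℝ) (n : ℕ),
      Tendsto (fun z => z ^ n * Real.exp (c * z) * deriv A z) atTop (nhds 0))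
    (K : ℝ → ℝ → ℝ)
    (hK : ∀ x y : ℝ, K x y = ∫ l in Ioi (0:ℝ), A (x + l) * A (y + l))
    (s x y : ℝ) :
    (∫ z in Ioi (0:ℝ), Real.exp (-2 * s * z) * K (x + z) (y + z))
      = (∫ z in Ioi (0:ℝ), z * Real.exp (-2 * s * z) * (A (x + z) * A (y + z)))
        + 2 * s * ∫ z in Ioi (0:ℝ), z * Real.exp (-2 * s * z) * K (x + z) (y + z) := by
  have hAc : Continuous A := hA.continuous
  set f : ℝ → ℝ := fun u => A (x + u) * A (y + u) with hfdef
  have hfc : Continuous f :=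
    (hAc.comp (continuous_const.add continuous_id)).mul
      (hAc.comp (continuous_const.add continuous_id))
  -- tendsto of exp-weighted shifted A
  have hLimA : ∀ (c a : ℝ), Tendsto (fun u => Real.exp (c * u) * A (a + u)) atTop (nhds 0) := by
    intro c a
    have h1 : Tendsto (fun u : ℝ => a + u) atTop atTop := tendsto_atTop_add_const_left _ _ tendsto_id
    have h2 := ((hLim c 0).comp h1).const_mul (Real.exp (-(c * a)))
    rw [mul_zero] at h2
    refine h2.congr fun u => ?_
    simp only [Function.comp_apply, pow_zero, one_mul, ← mul_assoc, ← Real.exp_add]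
    ring_nf
  -- tendsto of weighted f
  have hLimf : ∀ (c : ℝ) (n : ℕ),
      Tendsto (fun u => u ^ n * Real.exp (c * u) * f u) atTop (nhds 0) := by
    intro c n
    have h1 : Tendsto (fun u : ℝ => u ^ n * Real.exp (-u)) atTop (nhds 0) :=
      tendsto_pow_mul_exp_neg_atTop_nhds_zero n
    have h2 := hLimA (c + 1) x
    have h3 := hLimA 0 y
    have h4 := (h1.mul h2).mul h3
    simp only [mul_zero, zero_mul] at h4
    refine h4.congr fun u => ?_
    have he : Real.exp (c * u) = Real.exp (-u) * Real.exp ((c + 1) * u) := by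
      rw [← Real.exp_add]; ring_nf
    simp only [hfdef, zero_mul, Real.exp_zero, one_mul]
    rw [he]; ring
  -- integrability of exp-weighted shifted A on Ioi 0
  have hIntA : ∀ (c a : ℝ), IntegrableOn (fun u => Real.exp (c * u) * A (a + u)) (Ioi 0) := by
    intro c a
    have hexpc : Continuous fun v : ℝ => Real.exp (c * v) :=
      Real.continuous_exp.comp (continuous_const.mul continuous_id)
    have hbase : IntegrableOn (fun v => Real.exp (c * v) * A v) (Ioi 0) := by
      simpa using hInt c 0
    have h0 : IntegrableOn (fun v => Real.exp (c * v) * A v) (Ioi a) := by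
      rcases le_or_gt 0 a with h|h
      · exact hbase.mono_set (Ioi_subset_Ioi h)
      · have hsub : Ioi a ⊆ Icc a 0 ∪ Ioi 0 := by
          intro u hu
          rcases le_or_gt u 0 with h'|h'
          · exact Or.inl ⟨le_of_lt hu, h'⟩
          · exact Or.inr h'
        exact (((hexpc.mul hAc).integrableOn_Icc).union hbase).mono_set hsub
    have h1 : IntegrableOn (fun u => Real.exp (c * (u + a)) * A (u + a)) (Ioi 0) :=
      aux_integrableOn_comp_add (fun v => Real.exp (c * v) * A v) a 0 (by rw [zero_add]; exact h0)
    refine (h1.const_mul (Real.exp (-(c * a)))).congr (Eventually.of_forall fun u => ?_)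
    show Real.exp (-(c * a)) * (Real.exp (c * (u + a)) * A (u + a)) = Real.exp (c * u) * A (a + u)
    rw [← mul_assoc, ← Real.exp_add, add_comm a u]
    congr 1
    ring_nf
  -- integrability of weighted f on Ioi 0
  have hIntf : ∀ (c : ℝ) (n : ℕ),
      IntegrableOn (fun u => u ^ n * Real.exp (c * u) * f u) (Ioi 0) := by
    intro c n
    have hφc : Continuous fun u : ℝ => u ^ n * Real.exp (c * u) * A (y + u) :=
      ((continuous_pow n).mul
        (Real.continuous_exp.comp (continuous_const.mul continuous_id))).mul
        (hAc.comp (continuous_const.add continuous_id))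
    have hφ0 : Tendsto (fun u : ℝ => u ^ n * Real.exp (c * u) * A (y + u)) atTop (nhds 0) := by
      have h1 : Tendsto (fun u : ℝ => u ^ n * Real.exp (-u)) atTop (nhds 0) :=
        tendsto_pow_mul_exp_neg_atTop_nhds_zero n
      have h2 := hLimA (c + 1) y
      have h4 := h1.mul h2
      rw [mul_zero] at h4
      refine h4.congr fun u => ?_
      have he : Real.exp (c * u) = Real.exp (-u) * Real.exp ((c + 1) * u) := by
        rw [← Real.exp_add]; ring_nf
      rw [he]; ring
    obtain ⟨C, hC0, hC⟩ := aux_bdd_of_tendsto hφc hφ0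
    have hψ : IntegrableOn (fun u => A (x + u)) (Ioi 0) := by
      have := hIntA 0 x
      refine this.congr (Eventually.of_forall fun u => ?_)
      simp
    have hb : ∀ᵐ u ∂(volume.restrict (Ioi (0:ℝ))),
        ‖u ^ n * Real.exp (c * u) * A (y + u)‖ ≤ C := by
      refine (ae_restrict_iff' measurableSet_Ioi).2 (Eventually.of_forall fun u hu => ?_)
      rw [Real.norm_eq_abs]
      exact hC u (le_of_lt hu)
    have := Integrable.bdd_mul (c := C) hψ hφc.aestronglyMeasurable hb
    refine this.congr (Eventually.of_forall fun u => ?_)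
    show u ^ n * Real.exp (c * u) * A (y + u) * A (x + u) = u ^ n * Real.exp (c * u) * f u
    simp only [hfdef]; ring
  -- the primitive G
  set G : ℝ → ℝ := fun z => (∫ u in Ioi (0:ℝ), f u) - ∫ t in (0:ℝ)..z, f t with hGdef
  have hG' : ∀ z : ℝ, HasDerivAt G (-(f z)) z := by
    intro z
    have h1 : HasDerivAt (fun w => ∫ t in (0:ℝ)..w, f t) (f z) z :=
      intervalIntegral.integral_hasDerivAt_right (hfc.intervalIntegrable 0 z)
        hfc.stronglyMeasurable.stronglyMeasurableAtFilter hfc.continuousAt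
    simpa [hGdef] using h1.const_sub (∫ u in Ioi (0:ℝ), f u)
  have hGcont : Continuous G := continuous_iff_continuousAt.2 fun z => (hG' z).continuousAt
  have hfint : IntegrableOn f (Ioi 0) := by simpa using hIntf 0 0
  have hGIoi : ∀ z : ℝ, 0 ≤ z → G z = ∫ u in Ioi z, f u := by
    intro z hz
    have hsplit : ∫ u in Ioi (0:ℝ), f u = (∫ u in Ioc 0 z, f u) + ∫ u in Ioi z, f u := by
      rw [← setIntegral_union (Ioc_disjoint_Ioi le_rfl) measurableSet_Ioi
          (hfint.mono_set Ioc_subset_Ioi_self) (hfint.mono_set (Ioi_subset_Ioi hz)),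
        Ioc_union_Ioi_eq_Ioi hz]
    have h2 : ∫ t in (0:ℝ)..z, f t = ∫ u in Ioc 0 z, f u := intervalIntegral.integral_of_le hz
    simp only [hGdef]
    rw [h2, hsplit]; ring
  -- exponential bound on G
  set c₀ : ℝ := 2 * |s| + 1 with hc₀def
  have hc₀pos : 0 < c₀ := by positivity
  obtain ⟨Cf, hCf0, hCf⟩ :
      ∃ C : ℝ, 0 ≤ C ∧ ∀ u : ℝ, 0 ≤ u → |Real.exp (c₀ * u) * f u| ≤ C := by
    refine aux_bdd_of_tendsto ?_ ?_
    · exact (Real.continuous_exp.comp (continuous_const.mul continuous_id)).mul hfc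
    · simpa using hLimf c₀ 0
  set Ic : ℝ := ∫ u in Ioi (0:ℝ), Real.exp (-c₀ * u) with hIcdef
  have hIc0 : 0 ≤ Ic := setIntegral_nonneg measurableSet_Ioi fun u _ => (Real.exp_pos _).le
  have hfabs : ∀ u : ℝ, 0 ≤ u → |f u| ≤ Cf * Real.exp (-c₀ * u) := by
    intro u hu
    have h1 := hCf u hu
    rw [abs_mul, abs_of_pos (Real.exp_pos _)] at h1
    calc |f u| = Real.exp (-c₀ * u) * (Real.exp (c₀ * u) * |f u|) := by
          rw [← mul_assoc, ← Real.exp_add, show -c₀ * u + c₀ * u = 0 by ring,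
            Real.exp_zero, one_mul]
      _ ≤ Real.exp (-c₀ * u) * Cf := mul_le_mul_of_nonneg_left h1 (Real.exp_pos _).le
      _ = Cf * Real.exp (-c₀ * u) := by ring
  have hGbound : ∀ z : ℝ, 0 ≤ z → |G z| ≤ Cf * Ic * Real.exp (-c₀ * z) := by
    intro z hz
    rw [hGIoi z hz]
    have habs1 : |∫ u in Ioi z, f u| ≤ ∫ u in Ioi z, |f u| := by
      simpa [Real.norm_eq_abs] using
        norm_integral_le_integral_norm (μ := volume.restrict (Ioi z)) f
    have habs2 : ∫ u in Ioi z, |f u| ≤ ∫ u in Ioi z, Cf * Real.exp (-c₀ * u) := by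
      refine setIntegral_mono_on ((hfint.mono_set (Ioi_subset_Ioi hz)).abs)
        (((exp_neg_integrableOn_Ioi z hc₀pos)).const_mul Cf) measurableSet_Ioi
        fun u hu => hfabs u (le_trans hz (le_of_lt hu))
    have hval : ∫ u in Ioi z, Cf * Real.exp (-c₀ * u) = Cf * Ic * Real.exp (-c₀ * z) := by
      have h3 : ∫ u in Ioi z, Real.exp (-c₀ * u) = Ic * Real.exp (-c₀ * z) := by
        have h4 := aux_setIntegral_comp_add (fun u => Real.exp (-c₀ * u)) z 0
        rw [zero_add] at h4
        rw [← h4]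
        have h5 : ∀ u : ℝ, Real.exp (-c₀ * (u + z)) = Real.exp (-c₀ * u) * Real.exp (-c₀ * z) := by
          intro u; rw [← Real.exp_add]; ring_nf
        simp_rw [h5]
        rw [integral_mul_const]
      rw [integral_const_mul, h3]; ring
    calc |∫ u in Ioi z, f u| ≤ ∫ u in Ioi z, |f u| := habs1
      _ ≤ ∫ u in Ioi z, Cf * Real.exp (-c₀ * u) := habs2
      _ = Cf * Ic * Real.exp (-c₀ * z) := hval
  -- key pointwise bound used twice
  have hexpc : -2 * s - c₀ ≤ -1 := by
    have := neg_abs_le s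
    have := le_abs_self s
    simp only [hc₀def]
    linarith
  have hFbd : ∀ z : ℝ, 0 ≤ z →
      z * Real.exp (-2 * s * z) * |G z| ≤ (Cf * Ic) * (z * Real.exp (-z)) := by
    intro z hz
    have h1 : z * Real.exp (-2 * s * z) * |G z|
        ≤ z * Real.exp (-2 * s * z) * (Cf * Ic * Real.exp (-c₀ * z)) := by
      refine mul_le_mul_of_nonneg_left (hGbound z hz) (by positivity)
    have h2 : Real.exp (-2 * s * z) * Real.exp (-c₀ * z) ≤ Real.exp (-z) := by
      rw [← Real.exp_add]
      refine Real.exp_le_exp.2 ?_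
      nlinarith
    calc z * Real.exp (-2 * s * z) * |G z|
        ≤ z * Real.exp (-2 * s * z) * (Cf * Ic * Real.exp (-c₀ * z)) := h1
      _ = (Cf * Ic) * (z * (Real.exp (-2 * s * z) * Real.exp (-c₀ * z))) := by ring
      _ ≤ (Cf * Ic) * (z * Real.exp (-z)) := by
          refine mul_le_mul_of_nonneg_left (mul_le_mul_of_nonneg_left h2 hz) (by positivity)
  have hP1bd : ∀ z : ℝ, 0 ≤ z →
      Real.exp (-2 * s * z) * |G z| ≤ (Cf * Ic) * Real.exp (-z) := by
    intro z hz
    have h2 : Real.exp (-2 * s * z) * Real.exp (-c₀ * z) ≤ Real.exp (-z) := by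
      rw [← Real.exp_add]
      refine Real.exp_le_exp.2 ?_
      nlinarith
    calc Real.exp (-2 * s * z) * |G z|
        ≤ Real.exp (-2 * s * z) * (Cf * Ic * Real.exp (-c₀ * z)) :=
          mul_le_mul_of_nonneg_left (hGbound z hz) (Real.exp_pos _).le
      _ = (Cf * Ic) * (Real.exp (-2 * s * z) * Real.exp (-c₀ * z)) := by ring
      _ ≤ (Cf * Ic) * Real.exp (-z) := mul_le_mul_of_nonneg_left h2 (by positivity)
  -- integrability of the three pieces
  have hP2 : IntegrableOn (fun z => z * Real.exp (-2 * s * z) * f z) (Ioi 0) := by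
    simpa using hIntf (-2 * s) 1
  have hexpGmeas : Continuous fun z : ℝ => Real.exp (-2 * s * z) :=
    Real.continuous_exp.comp (continuous_const.mul continuous_id)
  have hP1 : IntegrableOn (fun z => Real.exp (-2 * s * z) * G z) (Ioi 0) := by
    refine Integrable.mono' (g := fun z => (Cf * Ic) * Real.exp (-z))
      (((exp_neg_integrableOn_Ioi 0 one_pos).const_mul (Cf * Ic)).congr
        (Eventually.of_forall fun z => by norm_num))
      ((hexpGmeas.mul hGcont).aestronglyMeasurable) ?_
    refine (ae_restrict_iff' measurableSet_Ioi).2 (Eventually.of_forall fun z hz => ?_)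
    have hz0 : (0:ℝ) ≤ z := le_of_lt hz
    have := hP1bd z hz0
    calc ‖Real.exp (-2 * s * z) * G z‖ = Real.exp (-2 * s * z) * |G z| := by
          rw [Real.norm_eq_abs, abs_mul, abs_of_pos (Real.exp_pos _)]
      _ ≤ (Cf * Ic) * Real.exp (-z) := this
  have hP3 : IntegrableOn (fun z => z * Real.exp (-2 * s * z) * G z) (Ioi 0) := by
    refine Integrable.mono' (g := fun z => (2 * (Cf * Ic)) * Real.exp (-(1/2) * z))
      ((exp_neg_integrableOn_Ioi 0 (by norm_num)).const_mul (2 * (Cf * Ic)))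
      (((continuous_id.mul hexpGmeas).mul hGcont).aestronglyMeasurable) ?_
    refine (ae_restrict_iff' measurableSet_Ioi).2 (Eventually.of_forall fun z hz => ?_)
    have hz0 : (0:ℝ) ≤ z := le_of_lt hz
    have h1 := hFbd z hz0
    have h5 : z * Real.exp (-z) ≤ 2 * Real.exp (-(1/2) * z) := by
      have h6 : z ≤ 2 * Real.exp ((1/2) * z) := by
        nlinarith [Real.add_one_le_exp ((1/2) * z), Real.exp_pos ((1/2) * z)]
      calc z * Real.exp (-z) ≤ 2 * Real.exp ((1/2) * z) * Real.exp (-z) :=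
            mul_le_mul_of_nonneg_right h6 (Real.exp_pos _).le
        _ = 2 * Real.exp (-(1/2) * z) := by rw [mul_assoc, ← Real.exp_add]; ring_nf
    calc ‖z * Real.exp (-2 * s * z) * G z‖ = z * Real.exp (-2 * s * z) * |G z| := by
          rw [Real.norm_eq_abs, abs_mul, abs_mul, abs_of_nonneg hz0,
            abs_of_pos (Real.exp_pos _)]
      _ ≤ (Cf * Ic) * (z * Real.exp (-z)) := h1
      _ ≤ (Cf * Ic) * (2 * Real.exp (-(1/2) * z)) :=
          mul_le_mul_of_nonneg_left h5 (by positivity)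
      _ = (2 * (Cf * Ic)) * Real.exp (-(1/2) * z) := by ring
  -- derivative of F
  have hF' : ∀ z : ℝ, HasDerivAt (fun w => w * Real.exp (-2 * s * w) * G w)
      ((1 * Real.exp (-2 * s * z) + z * (Real.exp (-2 * s * z) * (-2 * s))) * G z
        + z * Real.exp (-2 * s * z) * (-(f z))) z := by
    intro z
    have he : HasDerivAt (fun w : ℝ => Real.exp (-2 * s * w))
        (Real.exp (-2 * s * z) * (-2 * s)) z := by
      have h1 : HasDerivAt (fun w : ℝ => -2 * s * w) (-2 * s) z := by
        simpa using (hasDerivAt_id z).const_mul (-2 * s)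
      exact (Real.hasDerivAt_exp _).comp z h1
    exact ((hasDerivAt_id z).mul he).mul (hG' z)
  -- limit of F at infinity
  have hFlim : Tendsto (fun z => z * Real.exp (-2 * s * z) * G z) atTop (nhds 0) := by
    rw [tendsto_zero_iff_abs_tendsto_zero]
    refine squeeze_zero' (g := fun z => (Cf * Ic) * (z * Real.exp (-z)))
      (Eventually.of_forall fun z => abs_nonneg _) ?_ ?_
    · filter_upwards [eventually_ge_atTop (0:ℝ)] with z hz
      calc |z * Real.exp (-2 * s * z) * G z| = z * Real.exp (-2 * s * z) * |G z| := by
            rw [abs_mul, abs_mul, abs_of_nonneg hz, abs_of_pos (Real.exp_pos _)]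
        _ ≤ (Cf * Ic) * (z * Real.exp (-z)) := hFbd z hz
    · have h1 : Tendsto (fun z : ℝ => z * Real.exp (-z)) atTop (nhds 0) := by
        simpa using tendsto_pow_mul_exp_neg_atTop_nhds_zero 1
      simpa using h1.const_mul (Cf * Ic)
  -- FTC on (0, ∞)
  have hF'int : IntegrableOn (fun z =>
      (1 * Real.exp (-2 * s * z) + z * (Real.exp (-2 * s * z) * (-2 * s))) * G z
        + z * Real.exp (-2 * s * z) * (-(f z))) (Ioi 0) := by
    refine (((hP1.add (hP3.const_mul (-2 * s))).sub hP2).congr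
      (Eventually.of_forall fun z => ?_))
    show Real.exp (-2 * s * z) * G z + (-2 * s) * (z * Real.exp (-2 * s * z) * G z)
        - z * Real.exp (-2 * s * z) * f z = _
    ring
  have hFTC := integral_Ioi_of_hasDerivAt_of_tendsto (a := (0:ℝ))
    (f := fun w => w * Real.exp (-2 * s * w) * G w)
    (((continuous_id.mul hexpGmeas).mul hGcont).continuousWithinAt)
    (fun z _ => hF' z) hF'int hFlim
  have hF0 : (fun w => w * Real.exp (-2 * s * w) * G w) 0 = 0 := by norm_num
  simp only [zero_mul, sub_zero] at hFTC
  have hsplit2 : (∫ z in Ioi (0:ℝ),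
      ((1 * Real.exp (-2 * s * z) + z * (Real.exp (-2 * s * z) * (-2 * s))) * G z
        + z * Real.exp (-2 * s * z) * (-(f z))))
      = (∫ z in Ioi (0:ℝ), Real.exp (-2 * s * z) * G z)
        + (-2 * s) * (∫ z in Ioi (0:ℝ), z * Real.exp (-2 * s * z) * G z)
        - ∫ z in Ioi (0:ℝ), z * Real.exp (-2 * s * z) * f z := by
    have h7 : (∫ z in Ioi (0:ℝ),
        ((1 * Real.exp (-2 * s * z) + z * (Real.exp (-2 * s * z) * (-2 * s))) * G z
          + z * Real.exp (-2 * s * z) * (-(f z))))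
        = ∫ z in Ioi (0:ℝ), (Real.exp (-2 * s * z) * G z
            + (-2 * s) * (z * Real.exp (-2 * s * z) * G z)
            - z * Real.exp (-2 * s * z) * f z) :=
      setIntegral_congr_fun measurableSet_Ioi fun z _ => by ring
    have hadd : IntegrableOn (fun z => Real.exp (-2 * s * z) * G z
        + (-2 * s) * (z * Real.exp (-2 * s * z) * G z)) (Ioi 0) :=
      hP1.add (hP3.const_mul (-2 * s))
    rw [h7, integral_sub hadd hP2, integral_add hP1 (hP3.const_mul (-2 * s)),
      integral_const_mul]
  -- rewrite K in terms of G
  have hKG : ∀ z ∈ Ioi (0:ℝ), K (x + z) (y + z) = G z := by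
    intro z hz
    have hz0 : (0:ℝ) ≤ z := le_of_lt hz
    rw [hK, hGIoi z hz0]
    have h4 := aux_setIntegral_comp_add f z 0
    rw [zero_add] at h4
    rw [← h4]
    refine setIntegral_congr_fun measurableSet_Ioi fun l _ => ?_
    show A (x + z + l) * A (y + z + l) = f (l + z)
    simp only [hfdef]
    ring_nf
  have e1 : (∫ z in Ioi (0:ℝ), Real.exp (-2 * s * z) * K (x + z) (y + z))
      = ∫ z in Ioi (0:ℝ), Real.exp (-2 * s * z) * G z :=
    setIntegral_congr_fun measurableSet_Ioi fun z hz => by rw [hKG z hz]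
  have e3 : (∫ z in Ioi (0:ℝ), z * Real.exp (-2 * s * z) * K (x + z) (y + z))
      = ∫ z in Ioi (0:ℝ), z * Real.exp (-2 * s * z) * G z :=
    setIntegral_congr_fun measurableSet_Ioi fun z hz => by rw [hKG z hz]
  have e2 : (∫ z in Ioi (0:ℝ), z * Real.exp (-2 * s * z) * (A (x + z) * A (y + z)))
      = ∫ z in Ioi (0:ℝ), z * Real.exp (-2 * s * z) * f z := rfl
  rw [e1, e2, e3]
  rw [hsplit2] at hFTC
  linarith
end

section
/- For all s, x, y ∈ ℝ, the extended kernel satisfies (∂x − ∂y)K̃_s(x,y) = −(x−y)·∫₀^∞ e^{−2sz}·K(x+z, y+z) dz, where ∂x and ∂y denote partial differentiation in the first and second argument respectively. -/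
open MeasureTheory Real Filter Set

/-- A continuous function whose product with every exponential tends to zero at `+∞`
is bounded by a constant times any decaying exponential on any half-line. -/
lemma airy_decay {f : ℝ → ℝ} (hf : Continuous f) (c a : ℝ)
    (h : Tendsto (fun z => Real.exp (c * z) * f z) atTop (nhds 0)) :
    ∃ M : ℝ, 0 ≤ M ∧ ∀ u, a ≤ u → |f u| ≤ M * Real.exp (-(c * u)) := by
  have h1 : ∀ᶠ z in atTop, |Real.exp (c * z) * f z| ≤ 1 := by
    have := Metric.tendsto_nhds.mp h 1 one_pos
    filter_upwards [this] with z hz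
    rw [Real.dist_eq, sub_zero] at hz
    exact hz.le
  obtain ⟨z0, hz0⟩ := eventually_atTop.mp h1
  obtain ⟨C, hC⟩ := (isCompact_Icc (a := a) (b := z0)).exists_bound_of_continuousOn
    ((Real.continuous_exp.comp (continuous_const.mul continuous_id)).mul hf).continuousOn
  refine ⟨max C 1, le_max_of_le_right one_pos.le, fun u hu => ?_⟩
  have key : |Real.exp (c * u) * f u| ≤ max C 1 := by
    rcases le_total u z0 with h' | h'
    · have := hC u ⟨hu, h'⟩
      rw [Real.norm_eq_abs] at this
      exact le_max_of_le_left this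
    · exact le_max_of_le_right (hz0 u h')
  have heq : |f u| = Real.exp (-(c * u)) * |Real.exp (c * u) * f u| := by
    rw [abs_mul, Real.abs_exp, ← mul_assoc, ← Real.exp_add]
    simp
  rw [heq, mul_comm (max C 1)]
  exact mul_le_mul_of_nonneg_left key (Real.exp_pos _).le

theorem extended_airy_kernel_first_deriv_identity
    (A : ℝ → ℝ) (hA : ContDiff ℝ (⊤ : ℕ∞) A)
    (hAiry : ∀ x : ℝ, deriv (deriv A) x = x * A x)
    (hInt : ∀ (c : ℝ) (n : ℕ),
      IntegrableOn (fun z => z ^ n * Real.exp (c * z) * A z) (Ioi 0))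
    (hInt' : ∀ (c : ℝ) (n : ℕ),
      IntegrableOn (fun z => z ^ n * Real.exp (c * z) * deriv A z) (Ioi 0))
    (hLim : ∀ (c : ℝ) (n : ℕ),
      Tendsto (fun z => z ^ n * Real.exp (c * z) * A z) atTop (nhds 0))
    (hLim' : ∀ (c : ℝ) (n : ℕ),
      Tendsto (fun z => z ^ n * Real.exp (c * z) * deriv A z) atTop (nhds 0))
    (K : ℝ → ℝ → ℝ)
    (hK : ∀ x y : ℝ, K x y = ∫ l in Ioi (0:ℝ), A (x + l) * A (y + l))
    (Kt : ℝ → ℝ → ℝ → ℝ)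
    (hKt : ∀ s x y : ℝ,
      Kt s x y = ∫ l in Ioi (0:ℝ), Real.exp (-2 * s * l) * (A (x + l) * A (y + l)))
    (s x y : ℝ) :
    deriv (fun x' => Kt s x' y) x - deriv (fun y' => Kt s x y') y
      = -(x - y) * ∫ z in Ioi (0:ℝ), Real.exp (-2 * s * z) * K (x + z) (y + z) := by
  have hAc : Continuous A := hA.continuous
  have hdiff : Differentiable ℝ A := hA.differentiable (by simp)
  have hA' : ContDiff ℝ ((⊤:ℕ∞) : WithTop ℕ∞) (deriv A) := (contDiff_infty_iff_deriv.mp (hA.of_le (by simp))).2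
  have hA'c : Continuous (deriv A) := hA'.continuous
  have hdiff' : Differentiable ℝ (deriv A) := hA'.differentiable (by simp)
  have hLA : ∀ c : ℝ, Tendsto (fun z => Real.exp (c * z) * A z) atTop (nhds 0) := by
    intro c; simpa using hLim c 0
  have hLA' : ∀ c : ℝ, Tendsto (fun z => Real.exp (c * z) * deriv A z) atTop (nhds 0) := by
    intro c; simpa using hLim' c 0
  have hA0 : Tendsto A atTop (nhds 0) := by simpa using hLA 0
  have hA'0 : Tendsto (deriv A) atTop (nhds 0) := by simpa using hLA' 0
  set c0 : ℝ := |s| + 1 with hc0def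
  have hc0pos : (0:ℝ) < c0 := by rw [hc0def]; positivity
  set a0 : ℝ := min (x - 1) (y - 1) with ha0def
  obtain ⟨M, hM0, hM⟩ := airy_decay hAc c0 a0 (hLA c0)
  obtain ⟨M', hM'0, hM'⟩ := airy_decay hA'c c0 a0 (hLA' c0)
  -- generic product bound on arguments shifted into the decay region
  have hbd : ∀ (f g : ℝ → ℝ) (Mf Mg : ℝ), 0 ≤ Mf → 0 ≤ Mg →
      (∀ u, a0 ≤ u → |f u| ≤ Mf * Real.exp (-(c0 * u))) →
      (∀ u, a0 ≤ u → |g u| ≤ Mg * Real.exp (-(c0 * u))) →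
      ∀ p q l : ℝ, 0 ≤ l → x - 1 ≤ p → y - 1 ≤ q →
      |Real.exp (-2 * s * l) * (f (p + l) * g (q + l))|
        ≤ (Mf * Mg * Real.exp (-(c0 * (x - 1))) * Real.exp (-(c0 * (y - 1))))
            * Real.exp (-2 * l) := by
    intro f g Mf Mg hMf hMg bf bg p q l hl hp hq
    have ha0p : a0 ≤ p := le_trans (min_le_left _ _) hp
    have ha0q : a0 ≤ q := le_trans (min_le_right _ _) hq
    have b1 := bf (p + l) (by linarith)
    have b2 := bg (q + l) (by linarith)
    have step1 : |Real.exp (-2 * s * l) * (f (p + l) * g (q + l))|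
        ≤ Real.exp (-2 * s * l) *
          ((Mf * Real.exp (-(c0 * (p + l)))) * (Mg * Real.exp (-(c0 * (q + l))))) := by
      rw [abs_mul, abs_mul, Real.abs_exp]
      gcongr <;> first | exact b1 | exact b2 | positivity
    refine step1.trans ?_
    have step2 : Real.exp (-2 * s * l) *
        ((Mf * Real.exp (-(c0 * (p + l)))) * (Mg * Real.exp (-(c0 * (q + l)))))
        = (Mf * Mg) * Real.exp (-2 * s * l + -(c0 * (p + l)) + -(c0 * (q + l))) := by
      rw [Real.exp_add, Real.exp_add]; ring
    have step3 : (Mf * Mg * Real.exp (-(c0 * (x - 1))) * Real.exp (-(c0 * (y - 1))))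
          * Real.exp (-2 * l)
        = (Mf * Mg) * Real.exp (-(c0 * (x - 1)) + -(c0 * (y - 1)) + -2 * l) := by
      rw [Real.exp_add, Real.exp_add]; ring
    rw [step2, step3]
    refine mul_le_mul_of_nonneg_left (Real.exp_le_exp.mpr ?_) (mul_nonneg hMf hMg)
    nlinarith [mul_le_mul_of_nonneg_left hp hc0pos.le,
      mul_le_mul_of_nonneg_left hq hc0pos.le,
      mul_nonneg hl (by linarith [neg_abs_le s] : (0:ℝ) ≤ s + |s|), hc0def,
      le_abs_self s, neg_abs_le s]
  -- plain product bound (no exponential weight), used for the inner FTC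
  have hprod : ∀ p q t : ℝ, a0 ≤ p → a0 ≤ q → 0 ≤ t →
      |A (p + t) * A (q + t)|
        ≤ (M * M * Real.exp (-(c0 * p)) * Real.exp (-(c0 * q))) * Real.exp (-(2 * c0) * t) := by
    intro p q t hp hq ht
    have b1 := hM (p + t) (by linarith)
    have b2 := hM (q + t) (by linarith)
    calc |A (p + t) * A (q + t)| = |A (p + t)| * |A (q + t)| := abs_mul _ _
      _ ≤ (M * Real.exp (-(c0 * (p + t)))) * (M * Real.exp (-(c0 * (q + t)))) :=
          mul_le_mul b1 b2 (abs_nonneg _) (by positivity)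
      _ = (M * M) * Real.exp (-(c0 * (p + t)) + -(c0 * (q + t))) := by
          rw [Real.exp_add]; ring
      _ = (M * M * Real.exp (-(c0 * p)) * Real.exp (-(c0 * q))) * Real.exp (-(2 * c0) * t) := by
          rw [show -(c0 * (p + t)) + -(c0 * (q + t))
              = -(c0 * p) + (-(c0 * q) + -(2 * c0) * t) by ring, Real.exp_add, Real.exp_add]
          ring
  -- key pointwise identity via FTC on (0, ∞)
  have key : ∀ u v : ℝ, a0 < u → a0 < v →
      deriv A u * A v - A u * deriv A v = -(u - v) * K u v := by
    intro u v hu hv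
    have hAt : ∀ w t : ℝ, HasDerivAt (fun t : ℝ => A (w + t)) (deriv A (w + t)) t := by
      intro w t
      simpa [Function.comp_def] using
        (hdiff (w + t)).hasDerivAt.comp t ((hasDerivAt_id t).const_add w)
    have hAt' : ∀ w t : ℝ, HasDerivAt (fun t : ℝ => deriv A (w + t)) ((w + t) * A (w + t)) t := by
      intro w t
      have := (hdiff' (w + t)).hasDerivAt.comp t ((hasDerivAt_id t).const_add w)
      rw [hAiry] at this
      simpa [Function.comp_def] using this
    have hfd : ∀ t : ℝ, HasDerivAt
        (fun t => deriv A (u + t) * A (v + t) - A (u + t) * deriv A (v + t))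
        ((u - v) * (A (u + t) * A (v + t))) t := by
      intro t
      have h := ((hAt' u t).mul (hAt v t)).sub ((hAt u t).mul (hAt' v t))
      exact h.congr_deriv (by ring)
    have hint : IntegrableOn (fun t => (u - v) * (A (u + t) * A (v + t))) (Ioi (0:ℝ)) := by
      refine Integrable.mono'
        (g := fun t => (|u - v| * (M * M * Real.exp (-(c0 * u)) * Real.exp (-(c0 * v))))
          * Real.exp (-(2 * c0) * t))
        ((exp_neg_integrableOn_Ioi 0 (by positivity)).const_mul _)
        (Continuous.aestronglyMeasurable (by fun_prop)) ?_
      rw [ae_restrict_iff' measurableSet_Ioi]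
      refine ae_of_all _ fun t ht => ?_
      rw [Real.norm_eq_abs, abs_mul]
      refine le_trans (mul_le_mul_of_nonneg_left (hprod u v t hu.le hv.le (le_of_lt ht))
        (abs_nonneg (u - v))) (le_of_eq (by ring))
    have htend : Tendsto
        (fun t => deriv A (u + t) * A (v + t) - A (u + t) * deriv A (v + t)) atTop (nhds 0) := by
      have hcomp : Tendsto (fun t : ℝ => u + t) atTop atTop :=
        tendsto_atTop_add_const_left atTop u tendsto_id
      have hcomp' : Tendsto (fun t : ℝ => v + t) atTop atTop :=
        tendsto_atTop_add_const_left atTop v tendsto_id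
      have t1 : Tendsto (fun t : ℝ => A (u + t)) atTop (nhds 0) := hA0.comp hcomp
      have t2 : Tendsto (fun t : ℝ => A (v + t)) atTop (nhds 0) := hA0.comp hcomp'
      have t3 : Tendsto (fun t : ℝ => deriv A (u + t)) atTop (nhds 0) := hA'0.comp hcomp
      have t4 : Tendsto (fun t : ℝ => deriv A (v + t)) atTop (nhds 0) := hA'0.comp hcomp'
      simpa using (t3.mul t2).sub (t1.mul t4)
    have hFTC := integral_Ioi_of_hasDerivAt_of_tendsto' (a := 0)
      (fun t _ => hfd t) hint htend
    rw [MeasureTheory.integral_const_mul] at hFTC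
    rw [hK u v]
    simp only [add_zero] at hFTC
    linarith
  -- dominated-convergence data shared by both derivatives
  have hexp2 : ∀ C : ℝ, Integrable (fun l : ℝ => C * Real.exp (-2 * l))
      (volume.restrict (Ioi 0)) :=
    fun C => (exp_neg_integrableOn_Ioi 0 two_pos).const_mul C
  have hFint : Integrable (fun l => Real.exp (-2 * s * l) * (A (x + l) * A (y + l)))
      (volume.restrict (Ioi 0)) := by
    refine Integrable.mono' (hexp2 (M * M * Real.exp (-(c0 * (x - 1))) * Real.exp (-(c0 * (y - 1)))))
      (Continuous.aestronglyMeasurable (by fun_prop)) ?_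
    rw [ae_restrict_iff' measurableSet_Ioi]
    refine ae_of_all _ fun l hl => ?_
    rw [Real.norm_eq_abs]
    exact hbd A A M M hM0 hM0 hM hM x y l (le_of_lt hl) (by linarith) (by linarith)
  have hAt : ∀ w t : ℝ, HasDerivAt (fun t : ℝ => A (t + w)) (deriv A (t + w)) t := by
    intro w t
    simpa [Function.comp_def] using
      (hdiff (t + w)).hasDerivAt.comp t ((hasDerivAt_id t).add_const w)
  -- derivative in x
  have hdx : HasDerivAt (fun x' => Kt s x' y)
      (∫ l in Ioi (0:ℝ), Real.exp (-2 * s * l) * (deriv A (x + l) * A (y + l))) x ∧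
      Integrable (fun l => Real.exp (-2 * s * l) * (deriv A (x + l) * A (y + l)))
        (volume.restrict (Ioi 0)) := by
    have hfun : (fun x' => Kt s x' y)
        = fun x' => ∫ l in Ioi (0:ℝ), Real.exp (-2 * s * l) * (A (x' + l) * A (y + l)) :=
      funext fun x' => hKt s x' y
    have H := hasDerivAt_integral_of_dominated_loc_of_deriv_le (μ := volume.restrict (Ioi 0))
      (F := fun x' l => Real.exp (-2 * s * l) * (A (x' + l) * A (y + l)))
      (F' := fun x' l => Real.exp (-2 * s * l) * (deriv A (x' + l) * A (y + l)))
      (x₀ := x) (s := Metric.ball x 1)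
      (bound := fun l => (M' * M * Real.exp (-(c0 * (x - 1))) * Real.exp (-(c0 * (y - 1))))
        * Real.exp (-2 * l))
      (Metric.ball_mem_nhds x one_pos)
      (Eventually.of_forall fun x' => Continuous.aestronglyMeasurable (by fun_prop))
      hFint
      (Continuous.aestronglyMeasurable (by fun_prop))
      ?_ (hexp2 _) ?_
    · rw [hfun]
      exact ⟨H.2, H.1⟩
    · rw [ae_restrict_iff' measurableSet_Ioi]
      refine ae_of_all _ fun l hl x' hx' => ?_
      have hx'1 : x - 1 ≤ x' := by
        have : |x' - x| < 1 := by simpa [Real.dist_eq] using hx'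
        linarith [(abs_lt.mp this).1]
      rw [Real.norm_eq_abs]
      exact hbd (deriv A) A M' M hM'0 hM0 hM' hM x' y l (le_of_lt hl) hx'1 (by linarith)
    · refine ae_of_all _ fun l x' _ => ?_
      exact ((hAt l x').mul_const (A (y + l))).const_mul (Real.exp (-2 * s * l))
  -- derivative in y
  have hdy : HasDerivAt (fun y' => Kt s x y')
      (∫ l in Ioi (0:ℝ), Real.exp (-2 * s * l) * (A (x + l) * deriv A (y + l))) y ∧
      Integrable (fun l => Real.exp (-2 * s * l) * (A (x + l) * deriv A (y + l)))
        (volume.restrict (Ioi 0)) := by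
    have hfun : (fun y' => Kt s x y')
        = fun y' => ∫ l in Ioi (0:ℝ), Real.exp (-2 * s * l) * (A (x + l) * A (y' + l)) :=
      funext fun y' => hKt s x y'
    have H := hasDerivAt_integral_of_dominated_loc_of_deriv_le (μ := volume.restrict (Ioi 0))
      (F := fun y' l => Real.exp (-2 * s * l) * (A (x + l) * A (y' + l)))
      (F' := fun y' l => Real.exp (-2 * s * l) * (A (x + l) * deriv A (y' + l)))
      (x₀ := y) (s := Metric.ball y 1)
      (bound := fun l => (M * M' * Real.exp (-(c0 * (x - 1))) * Real.exp (-(c0 * (y - 1))))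
        * Real.exp (-2 * l))
      (Metric.ball_mem_nhds y one_pos)
      (Eventually.of_forall fun y' => Continuous.aestronglyMeasurable (by fun_prop))
      hFint
      (Continuous.aestronglyMeasurable (by fun_prop))
      ?_ (hexp2 _) ?_
    · rw [hfun]
      exact ⟨H.2, H.1⟩
    · rw [ae_restrict_iff' measurableSet_Ioi]
      refine ae_of_all _ fun l hl y' hy' => ?_
      have hy'1 : y - 1 ≤ y' := by
        have : |y' - y| < 1 := by simpa [Real.dist_eq] using hy'
        linarith [(abs_lt.mp this).1]
      rw [Real.norm_eq_abs]
      exact hbd A (deriv A) M M' hM0 hM'0 hM hM' x y' l (le_of_lt hl) (by linarith) hy'1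
    · refine ae_of_all _ fun l y' _ => ?_
      exact (((hAt l y').const_mul (A (x + l))).const_mul (Real.exp (-2 * s * l)))
  rw [hdx.1.deriv, hdy.1.deriv, ← MeasureTheory.integral_sub hdx.2 hdy.2]
  have hcong : ∀ l ∈ Ioi (0:ℝ),
      Real.exp (-2 * s * l) * (deriv A (x + l) * A (y + l))
        - Real.exp (-2 * s * l) * (A (x + l) * deriv A (y + l))
      = (-(x - y)) * (Real.exp (-2 * s * l) * K (x + l) (y + l)) := by
    intro l hl
    have hl0 : (0:ℝ) < l := hl
    have hu : a0 < x + l := by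
      have := min_le_left (x - 1) (y - 1); rw [← ha0def] at this; linarith
    have hv : a0 < y + l := by
      have := min_le_right (x - 1) (y - 1); rw [← ha0def] at this; linarith
    have h2 := key (x + l) (y + l) hu hv
    have e : Real.exp (-2 * s * l) * (deriv A (x + l) * A (y + l))
        - Real.exp (-2 * s * l) * (A (x + l) * deriv A (y + l))
      = Real.exp (-2 * s * l)
        * (deriv A (x + l) * A (y + l) - A (x + l) * deriv A (y + l)) := by ring
    rw [e, h2]; ring
  rw [setIntegral_congr_fun measurableSet_Ioi hcong, MeasureTheory.integral_const_mul]
end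

section
/- For all s, x, y ∈ ℝ, the extended kernel satisfies (∂x² − ∂y²)K̃_s(x,y) = (x−y)·K̃_s(x,y), where ∂x and ∂y denote partial differentiation in the first and second argument respectively. -/
open MeasureTheory Real Filter Set

/-- decay faster than any exponential on any right half-line -/
def AiryDecay (f : ℝ → ℝ) : Prop :=
  ∀ c a : ℝ, ∃ M : ℝ, 0 ≤ M ∧ ∀ z, a ≤ z → |f z| ≤ M * Real.exp (-(c * z))

lemma airyDecay_of_tendsto (f : ℝ → ℝ) (hf : Continuous f)
    (h : ∀ c : ℝ, Tendsto (fun z => Real.exp (c * z) * f z) atTop (nhds 0)) :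
    AiryDecay f := by
  intro c a
  have h1 : ∀ᶠ z in atTop, |Real.exp (c * z) * f z| ≤ 1 := by
    have h0 := (h c).abs
    rw [abs_zero] at h0
    exact h0.eventually_le_const (by norm_num : (0:ℝ) < 1)
  obtain ⟨N, hN⟩ := h1.exists_forall_of_atTop
  set g : ℝ → ℝ := fun z => |Real.exp (c * z) * f z| with hg
  have hgc : ContinuousOn g (Icc a N) :=
    ((Real.continuous_exp.comp (continuous_const.mul continuous_id)).mul hf).abs.continuousOn
  obtain ⟨M₀, hM₀⟩ := IsCompact.exists_bound_of_continuousOn isCompact_Icc hgc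
  refine ⟨max 1 (max M₀ 0), le_trans zero_le_one (le_max_left _ _), fun z hz => ?_⟩
  have hexp : Real.exp (-(c * z)) > 0 := Real.exp_pos _
  have key : |f z| * Real.exp (c * z) ≤ max 1 (max M₀ 0) := by
    rcases le_total N z with hNz | hzN
    · have := hN z hNz
      calc |f z| * Real.exp (c * z) = |Real.exp (c * z) * f z| := by
            rw [abs_mul, abs_of_pos (Real.exp_pos _)]; ring
        _ ≤ 1 := this
        _ ≤ _ := le_max_left _ _
    · have := hM₀ z ⟨hz, hzN⟩
      have h2 : ‖g z‖ = |f z| * Real.exp (c * z) := by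
        simp only [g, Real.norm_eq_abs, abs_abs, abs_mul, abs_of_pos (Real.exp_pos _)]
        ring
      rw [h2] at this
      exact this.trans ((le_max_left _ _).trans (le_max_right _ _))
  have : |f z| = |f z| * Real.exp (c * z) * Real.exp (-(c * z)) := by
    rw [mul_assoc, ← Real.exp_add, add_neg_cancel, Real.exp_zero, mul_one]
  rw [this]
  exact mul_le_mul_of_nonneg_right key hexp.le

/-- main differentiation-under-the-integral engine -/
lemma airy_key (s : ℝ) (g g' B : ℝ → ℝ)
    (hg : ∀ z, HasDerivAt g (g' z) z)
    (hgC : Continuous g) (hg'C : Continuous g') (hBC : Continuous B)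
    (hdg : AiryDecay g) (hdg' : AiryDecay g') (hdB : AiryDecay B) (x : ℝ) :
    IntegrableOn (fun l => Real.exp (-2 * s * l) * (g' (x + l) * B l)) (Ioi (0:ℝ)) ∧
    HasDerivAt (fun x' => ∫ l in Ioi (0:ℝ), Real.exp (-2 * s * l) * (g (x' + l) * B l))
      (∫ l in Ioi (0:ℝ), Real.exp (-2 * s * l) * (g' (x + l) * B l)) x := by
  set c : ℝ := |s| + 1 with hc
  have hc0 : (0:ℝ) < c := by positivity
  obtain ⟨M₁, hM₁0, hM₁⟩ := hdg' c (x - 1)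
  obtain ⟨M₂, hM₂0, hM₂⟩ := hdB c 0
  obtain ⟨Mg, hMg0, hMg⟩ := hdg c (x - 1)
  -- the general bounding computation
  have gen : ∀ (M : ℝ), 0 ≤ M → ∀ (f : ℝ → ℝ),
      (∀ z, x - 1 ≤ z → |f z| ≤ M * Real.exp (-(c * z))) →
      ∀ x' ∈ Metric.ball x 1, ∀ l ∈ Ioi (0:ℝ),
      ‖Real.exp (-2 * s * l) * (f (x' + l) * B l)‖ ≤
        M * M₂ * Real.exp (-(c * (x - 1))) * Real.exp (-2 * l) := by
    intro M hM0 f hfb x' hx' l hl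
    simp only [Metric.mem_ball, Real.dist_eq] at hx'
    have hl0 : (0:ℝ) < l := hl
    have hx'1 : x - 1 ≤ x' := by cases abs_lt.mp hx'; linarith
    have e1 : Real.exp (-2 * s * l) ≤ Real.exp (2 * |s| * l) := by
      apply Real.exp_le_exp.2
      have : -s ≤ |s| := neg_le_abs s
      nlinarith
    have e2 : |f (x' + l)| ≤ M * Real.exp (-(c * ((x - 1) + l))) := by
      refine (hfb (x' + l) (by linarith)).trans ?_
      apply mul_le_mul_of_nonneg_left _ hM0
      apply Real.exp_le_exp.2
      nlinarith
    have e3 : |B l| ≤ M₂ * Real.exp (-(c * l)) := hM₂ l hl0.le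
    calc ‖Real.exp (-2 * s * l) * (f (x' + l) * B l)‖
        = Real.exp (-2 * s * l) * (|f (x' + l)| * |B l|) := by
          rw [Real.norm_eq_abs, abs_mul, abs_mul, abs_of_pos (Real.exp_pos _)]
      _ ≤ Real.exp (2 * |s| * l) * ((M * Real.exp (-(c * ((x - 1) + l)))) *
            (M₂ * Real.exp (-(c * l)))) := by
          apply mul_le_mul e1 (mul_le_mul e2 e3 (abs_nonneg _) (by positivity))
            (by positivity) (Real.exp_pos _).le
      _ = M * M₂ * Real.exp (-(c * (x - 1))) * Real.exp (-2 * l) := by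
          rw [show (M * Real.exp (-(c * ((x - 1) + l)))) * (M₂ * Real.exp (-(c * l)))
              = M * M₂ * (Real.exp (-(c * ((x - 1) + l))) * Real.exp (-(c * l))) by ring,
            ← Real.exp_add, ← mul_assoc,
            show Real.exp (2 * |s| * l) * (M * M₂) = M * M₂ * Real.exp (2 * |s| * l) by ring,
            mul_assoc (M * M₂), ← Real.exp_add,
            show M * M₂ * Real.exp (-(c * (x - 1))) * Real.exp (-2 * l)
              = M * M₂ * (Real.exp (-(c * (x - 1))) * Real.exp (-2 * l)) by ring,
            ← Real.exp_add]
          congr 2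
          simp only [hc]
          ring
  -- integrability of the generic bound
  have bd_int : ∀ C : ℝ, IntegrableOn (fun l : ℝ => C * Real.exp (-2 * l)) (Ioi (0:ℝ)) :=
    fun C => (exp_neg_integrableOn_Ioi 0 (by norm_num : (0:ℝ) < 2)).const_mul C
  have meas : ∀ f : ℝ → ℝ, Continuous f →
      AEStronglyMeasurable (fun l => Real.exp (-2 * s * l) * (f l * B l))
        (volume.restrict (Ioi (0:ℝ))) := by
    intro f hf
    exact ((Real.continuous_exp.comp (by fun_prop)).mul (hf.mul hBC)).aestronglyMeasurable
  -- integrability of F x'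
  have hFint : ∀ x' ∈ Metric.ball x 1,
      Integrable (fun l => Real.exp (-2 * s * l) * (g (x' + l) * B l))
        (volume.restrict (Ioi (0:ℝ))) := by
    intro x' hx'
    refine Integrable.mono (bd_int (Mg * M₂ * Real.exp (-(c * (x - 1)))))
      (meas (fun l => g (x' + l)) (hgC.comp (by fun_prop))) ?_
    rw [ae_restrict_iff' measurableSet_Ioi]
    refine ae_of_all _ fun l hl => ?_
    refine (gen Mg hMg0 g hMg x' hx' l hl).trans ?_
    rw [Real.norm_eq_abs, abs_of_nonneg (by positivity)]
  refine hasDerivAt_integral_of_dominated_loc_of_deriv_le (μ := volume.restrict (Ioi (0:ℝ)))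
    (F := fun x' l => Real.exp (-2 * s * l) * (g (x' + l) * B l))
    (F' := fun x' l => Real.exp (-2 * s * l) * (g' (x' + l) * B l))
    (bound := fun l => M₁ * M₂ * Real.exp (-(c * (x - 1))) * Real.exp (-2 * l))
    (Metric.ball_mem_nhds x one_pos) ?_ (hFint x (Metric.mem_ball_self one_pos)) ?_ ?_ ?_ ?_
  · filter_upwards with x'
    exact meas (fun l => g (x' + l)) (hgC.comp (by fun_prop))
  · exact meas (fun l => g' (x + l)) (hg'C.comp (by fun_prop))
  · rw [ae_restrict_iff' measurableSet_Ioi]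
    exact ae_of_all _ fun l hl x' hx' => gen M₁ hM₁0 g' hM₁ x' hx' l hl
  · exact (exp_neg_integrableOn_Ioi 0 (by norm_num : (0:ℝ) < 2)).const_mul
      (M₁ * M₂ * Real.exp (-(c * (x - 1))))
  · rw [ae_restrict_iff' measurableSet_Ioi]
    refine ae_of_all _ fun l hl x' hx' => ?_
    have h1 : HasDerivAt (fun t => g (t + l)) (g' (x' + l)) x' :=
      HasDerivAt.comp_add_const x' l (hg (x' + l))
    exact HasDerivAt.const_mul (Real.exp (-2 * s * l)) (h1.mul_const (B l))

theorem extended_airy_kernel_second_deriv_identity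
    (A : ℝ → ℝ) (hA : ContDiff ℝ (⊤ : ℕ∞) A)
    (hAiry : ∀ x : ℝ, deriv (deriv A) x = x * A x)
    (hInt : ∀ (c : ℝ) (n : ℕ),
      IntegrableOn (fun z => z ^ n * Real.exp (c * z) * A z) (Ioi 0))
    (hInt' : ∀ (c : ℝ) (n : ℕ),
      IntegrableOn (fun z => z ^ n * Real.exp (c * z) * deriv A z) (Ioi 0))
    (hLim : ∀ (c : ℝ) (n : ℕ),
      Tendsto (fun z => z ^ n * Real.exp (c * z) * A z) atTop (nhds 0))
    (hLim' : ∀ (c : ℝ) (n : ℕ),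
      Tendsto (fun z => z ^ n * Real.exp (c * z) * deriv A z) atTop (nhds 0))
    (K : ℝ → ℝ → ℝ)
    (hK : ∀ x y : ℝ, K x y = ∫ l in Ioi (0:ℝ), A (x + l) * A (y + l))
    (Kt : ℝ → ℝ → ℝ → ℝ)
    (hKt : ∀ s x y : ℝ,
      Kt s x y = ∫ l in Ioi (0:ℝ), Real.exp (-2 * s * l) * (A (x + l) * A (y + l)))
    (s x y : ℝ) :
    iteratedDeriv 2 (fun x' => Kt s x' y) x - iteratedDeriv 2 (fun y' => Kt s x y') y
      = (x - y) * Kt s x y := by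
  have hAinf : ContDiff ℝ ((⊤ : ℕ∞) : WithTop ℕ∞) A := hA.of_le (by simp)
  have hA1 := contDiff_infty_iff_deriv.mp hAinf
  have hA2 := contDiff_infty_iff_deriv.mp hA1.2
  have hAc : Continuous A := hA.continuous
  have hA'c : Continuous (deriv A) := hA1.2.continuous
  have hAd : ∀ z, HasDerivAt A (deriv A z) z := fun z => (hA1.1 z).hasDerivAt
  have hA'd : ∀ z, HasDerivAt (deriv A) (z * A z) z := fun z => by
    have := (hA2.1 z).hasDerivAt
    rwa [hAiry z] at this
  -- decays
  have dA : AiryDecay A := by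
    refine airyDecay_of_tendsto A hAc fun c => ?_
    have := hLim c 0
    simpa [mul_comm] using this
  have dA' : AiryDecay (deriv A) := by
    refine airyDecay_of_tendsto (deriv A) hA'c fun c => ?_
    have := hLim' c 0
    simpa [mul_comm] using this
  have dzA : AiryDecay (fun z => z * A z) := by
    refine airyDecay_of_tendsto _ (continuous_id.mul hAc) fun c => ?_
    have := hLim c 1
    simp only [pow_one] at this
    have h2 : (fun z => Real.exp (c * z) * (z * A z))
        = fun z => z * Real.exp (c * z) * A z := by funext z; ring
    rwa [h2]
  have dAy : AiryDecay (fun l => A (y + l)) := by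
    intro c a
    obtain ⟨M, hM0, hM⟩ := dA c (y + a)
    refine ⟨M * Real.exp (-(c * y)), by positivity, fun z hz => ?_⟩
    calc |A (y + z)| ≤ M * Real.exp (-(c * (y + z))) := hM _ (by linarith)
      _ = M * Real.exp (-(c * y)) * Real.exp (-(c * z)) := by
          rw [mul_assoc, ← Real.exp_add]; congr 2; ring
  have dAx : AiryDecay (fun l => A (x + l)) := by
    intro c a
    obtain ⟨M, hM0, hM⟩ := dA c (x + a)
    refine ⟨M * Real.exp (-(c * x)), by positivity, fun z hz => ?_⟩
    calc |A (x + z)| ≤ M * Real.exp (-(c * (x + z))) := hM _ (by linarith)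
      _ = M * Real.exp (-(c * x)) * Real.exp (-(c * z)) := by
          rw [mul_assoc, ← Real.exp_add]; congr 2; ring
  have hAyc : Continuous (fun l => A (y + l)) := hAc.comp (by fun_prop)
  have hAxc : Continuous (fun l => A (x + l)) := hAc.comp (by fun_prop)
  -- x-side derivatives
  have key1x := fun t => airy_key s A (deriv A) (fun l => A (y + l)) hAd hAc hA'c hAyc
    dA dA' dAy t
  have key2x := airy_key s (deriv A) (fun z => z * A z) (fun l => A (y + l)) hA'd hA'c
    (continuous_id.mul hAc) hAyc dA' dzA dAy x
  have key1y := fun t => airy_key s A (deriv A) (fun l => A (x + l)) hAd hAc hA'c hAxc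
    dA dA' dAx t
  have key2y := airy_key s (deriv A) (fun z => z * A z) (fun l => A (x + l)) hA'd hA'c
    (continuous_id.mul hAc) hAxc dA' dzA dAx y
  have hfx : (fun x' => Kt s x' y)
      = fun x' => ∫ l in Ioi (0:ℝ), Real.exp (-2 * s * l) * (A (x' + l) * A (y + l)) := by
    funext x'; exact hKt s x' y
  have hfy : (fun y' => Kt s x y')
      = fun y' => ∫ l in Ioi (0:ℝ), Real.exp (-2 * s * l) * (A (y' + l) * A (x + l)) := by
    funext y'
    rw [hKt s x y']
    congr 1; funext l; ring
  have d2 : ∀ f : ℝ → ℝ, iteratedDeriv 2 f = deriv (deriv f) := by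
    intro f
    rw [show (2:ℕ) = 1 + 1 from rfl, iteratedDeriv_succ, iteratedDeriv_one]
  have derivx : deriv (fun x' => ∫ l in Ioi (0:ℝ),
      Real.exp (-2 * s * l) * (A (x' + l) * A (y + l)))
      = fun t => ∫ l in Ioi (0:ℝ), Real.exp (-2 * s * l) * (deriv A (t + l) * A (y + l)) := by
    funext t; exact ((key1x t).2).deriv
  have derivy : deriv (fun y' => ∫ l in Ioi (0:ℝ),
      Real.exp (-2 * s * l) * (A (y' + l) * A (x + l)))
      = fun t => ∫ l in Ioi (0:ℝ), Real.exp (-2 * s * l) * (deriv A (t + l) * A (x + l)) := by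
    funext t; exact ((key1y t).2).deriv
  rw [hfx, hfy, d2, d2, derivx, derivy, key2x.2.deriv, key2y.2.deriv, hKt,
    ← integral_sub key2x.1 key2y.1, ← integral_const_mul]
  congr 1; funext l; ring
end

section
/- For all s, x, y ∈ ℝ, the derivative in s of the function s ↦ (∂x − ∂y)K̃_s(x,y) equals 2(x−y)·∫₀^∞ z·e^{−2sz}·K(x+z, y+z) dz; consequently s·(∂/∂s)(∂x − ∂y)K̃_s(x,y) = 2s(x−y)·∫₀^∞ z·e^{−2sz}·K(x+z, y+z) dz. Here ∂x and ∂y denote partial differentiation in the first and second argument respectively. -/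
open MeasureTheory Real Filter Set

lemma aux_bdd {f : ℝ → ℝ} (hf : Continuous f) (h : Tendsto f atTop (nhds 0)) (a : ℝ) :
    ∃ C, 0 < C ∧ ∀ u, a ≤ u → |f u| ≤ C := by
  have h1 : ∀ᶠ u in atTop, |f u| < 1 := by
    have h2 : Tendsto (fun u => |f u|) atTop (nhds 0) := by
      simpa using h.abs
    exact h2.eventually_lt_const one_pos
  obtain ⟨M, hM⟩ := eventually_atTop.1 h1
  obtain ⟨C, hC⟩ := (isCompact_Icc (a := a) (b := M)).exists_bound_of_continuousOn
    hf.continuousOn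
  refine ⟨max C 1 + 1, by positivity, fun u hu => ?_⟩
  rcases le_or_gt u M with h' | h'
  · have := hC u ⟨hu, h'⟩
    simp only [Real.norm_eq_abs] at this
    have h3 : C ≤ max C 1 := le_max_left C 1
    linarith
  · have := hM u h'.le
    have h3 : (1:ℝ) ≤ max C 1 := le_max_right C 1
    linarith

lemma aux_expBound {f : ℝ → ℝ} (hf : Continuous f)
    (h : ∀ c : ℝ, Tendsto (fun z => Real.exp (c * z) * f z) atTop (nhds 0))
    (c a : ℝ) : ∃ C, 0 < C ∧ ∀ l, (0:ℝ) ≤ l → |f (a + l)| ≤ C * Real.exp (-c * l) := by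
  obtain ⟨C, hC0, hC⟩ := aux_bdd (by continuity) (h c) a
  refine ⟨C * Real.exp (-c * a), by positivity, fun l hl => ?_⟩
  have h1 := hC (a + l) (by linarith)
  rw [abs_mul, abs_of_pos (Real.exp_pos _)] at h1
  have h2 := mul_le_mul_of_nonneg_left h1 (Real.exp_pos (-(c * (a + l)))).le
  rw [← mul_assoc, ← Real.exp_add, neg_add_cancel, Real.exp_zero, one_mul] at h2
  calc |f (a + l)| ≤ Real.exp (-(c * (a + l))) * C := h2
    _ = C * Real.exp (-c * a) * Real.exp (-c * l) := by
        rw [show -(c * (a + l)) = -c * a + -c * l by ring, Real.exp_add]; ring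

lemma aux_integrable {g : ℝ → ℝ} (hg : Continuous g) {C b : ℝ} (hb : 0 < b)
    (hbound : ∀ l, (0:ℝ) ≤ l → |g l| ≤ C * Real.exp (-b * l)) :
    IntegrableOn g (Ioi (0:ℝ)) := by
  refine Integrable.mono' ((exp_neg_integrableOn_Ioi 0 hb).const_mul C)
    hg.aestronglyMeasurable.restrict ?_
  exact ae_restrict_of_forall_mem measurableSet_Ioi fun l hl => by
    simpa [Real.norm_eq_abs] using hbound l (le_of_lt hl)

lemma aux_tendsto_mul_exp {b : ℝ} (hb : 0 < b) :
    Tendsto (fun l : ℝ => l * Real.exp (-b * l)) atTop (nhds 0) := by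
  have h1 : Tendsto (fun u : ℝ => u * Real.exp (-u)) atTop (nhds 0) := by
    simpa using Real.tendsto_pow_mul_exp_neg_atTop_nhds_zero 1
  have h2 : Tendsto (fun l : ℝ => b * l) atTop atTop :=
    Tendsto.const_mul_atTop hb tendsto_id
  have h3 := (h1.comp h2).const_mul (1 / b)
  simp only [mul_zero] at h3
  refine h3.congr fun l => ?_
  simp only [Function.comp]
  field_simp

lemma aux_int_mul_exp {b : ℝ} (hb : 0 < b) :
    IntegrableOn (fun l => l * Real.exp (-b * l)) (Ioi (0:ℝ)) := by
  obtain ⟨C, hC0, hC⟩ := aux_bdd (by continuity) (aux_tendsto_mul_exp (half_pos hb)) 0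
  refine aux_integrable (by continuity) (half_pos hb) (C := C) fun l hl => ?_
  have h1 : l * Real.exp (-b * l) = (l * Real.exp (-(b/2) * l)) * Real.exp (-(b/2) * l) := by
    rw [mul_assoc, ← Real.exp_add]; ring_nf
  rw [abs_of_nonneg (by positivity), h1]
  have := hC l hl
  have h2 : l * Real.exp (-(b/2) * l) ≤ C := (le_abs_self _).trans this
  exact mul_le_mul_of_nonneg_right h2 (Real.exp_pos _).le

lemma aux_param_deriv
    (A : ℝ → ℝ) (hA : ContDiff ℝ (⊤ : ℕ∞) A)
    (hLA : ∀ c : ℝ, Tendsto (fun z => Real.exp (c * z) * A z) atTop (nhds 0))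
    (hLA' : ∀ c : ℝ, Tendsto (fun z => Real.exp (c * z) * deriv A z) atTop (nhds 0))
    (B : ℝ → ℝ) (hB : Continuous B) (CB : ℝ) (hCB0 : 0 < CB)
    (hCB : ∀ l, (0:ℝ) ≤ l → |B l| ≤ CB) (s' t : ℝ) :
    IntegrableOn (fun l => Real.exp (-2 * s' * l) * (deriv A (t + l) * B l)) (Ioi (0:ℝ)) ∧
    HasDerivAt (fun u => ∫ l in Ioi (0:ℝ), Real.exp (-2 * s' * l) * (A (u + l) * B l))
      (∫ l in Ioi (0:ℝ), Real.exp (-2 * s' * l) * (deriv A (t + l) * B l)) t := by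
  have hAc : Continuous A := hA.continuous
  have hA'c : Continuous (deriv A) := hA.continuous_deriv (by simp)
  have hAd : Differentiable ℝ A := hA.differentiable (by simp)
  set c : ℝ := 2 * |s'| + 1 with hc
  obtain ⟨C1, hC10, hC1⟩ := aux_expBound hAc hLA c (t - 1)
  obtain ⟨C1', hC1'0, hC1'⟩ := aux_expBound hA'c hLA' c (t - 1)
  have keyA : ∀ u ∈ Metric.ball t 1, ∀ l, (0:ℝ) ≤ l → |A (u + l)| ≤ C1 * Real.exp (-c * l) := by
    intro u hu l hl
    rw [Metric.mem_ball, Real.dist_eq, abs_sub_lt_iff] at hu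
    have hv : (0:ℝ) ≤ u - t + 1 + l := by linarith [hu.2]
    have h1 : A (u + l) = A ((t - 1) + (u - t + 1 + l)) := by ring_nf
    rw [h1]
    refine (hC1 _ hv).trans ?_
    have : Real.exp (-c * (u - t + 1 + l)) ≤ Real.exp (-c * l) := by
      apply Real.exp_le_exp.2
      have hcpos : (0:ℝ) ≤ c := by positivity
      nlinarith [hu.2]
    nlinarith
  have keyA' : ∀ u ∈ Metric.ball t 1, ∀ l, (0:ℝ) ≤ l →
      |deriv A (u + l)| ≤ C1' * Real.exp (-c * l) := by
    intro u hu l hl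
    rw [Metric.mem_ball, Real.dist_eq, abs_sub_lt_iff] at hu
    have hv : (0:ℝ) ≤ u - t + 1 + l := by linarith [hu.2]
    have h1 : deriv A (u + l) = deriv A ((t - 1) + (u - t + 1 + l)) := by ring_nf
    rw [h1]
    refine (hC1' _ hv).trans ?_
    have : Real.exp (-c * (u - t + 1 + l)) ≤ Real.exp (-c * l) := by
      apply Real.exp_le_exp.2
      have hcpos : (0:ℝ) ≤ c := by positivity
      nlinarith [hu.2]
    nlinarith
  have keyE : ∀ l, (0:ℝ) ≤ l → Real.exp (-2 * s' * l) ≤ Real.exp (2 * |s'| * l) := by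
    intro l hl
    apply Real.exp_le_exp.2
    nlinarith [neg_abs_le s', le_abs_self s']
  have expmul : ∀ l : ℝ, Real.exp (2 * |s'| * l) * Real.exp (-c * l) = Real.exp (-l) := by
    intro l; rw [← Real.exp_add]; congr 1; rw [hc]; ring
  have h := hasDerivAt_integral_of_dominated_loc_of_deriv_le
    (F := fun u l => Real.exp (-2 * s' * l) * (A (u + l) * B l))
    (F' := fun u l => Real.exp (-2 * s' * l) * (deriv A (u + l) * B l))
    (x₀ := t) (μ := volume.restrict (Ioi (0:ℝ)))
    (bound := fun l => C1' * CB * Real.exp (-l)) (s := Metric.ball t 1) (Metric.ball_mem_nhds _ one_pos)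
    (Filter.Eventually.of_forall fun u =>
      (Continuous.aestronglyMeasurable (by fun_prop)).restrict)
    ?_ (Continuous.aestronglyMeasurable (by fun_prop)).restrict ?_ ?_ ?_
  · exact ⟨h.1, h.2⟩
  · refine aux_integrable (by fun_prop) (b := 1) one_pos (C := C1 * CB) fun l hl => ?_
    have h1 := keyA t (Metric.mem_ball_self one_pos) l hl
    have h2 := hCB l hl
    have h3 := keyE l hl
    rw [abs_mul, abs_mul, abs_of_pos (Real.exp_pos _)]
    calc Real.exp (-2 * s' * l) * (|A (t + l)| * |B l|)
        ≤ Real.exp (2 * |s'| * l) * ((C1 * Real.exp (-c * l)) * CB) := by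
          apply mul_le_mul h3 _ (by positivity) (Real.exp_pos _).le
          exact mul_le_mul h1 h2 (abs_nonneg _) (by positivity)
      _ = C1 * CB * (Real.exp (2 * |s'| * l) * Real.exp (-c * l)) := by ring
      _ = C1 * CB * Real.exp (-1 * l) := by rw [expmul, neg_one_mul]
  · refine ae_restrict_of_forall_mem measurableSet_Ioi fun l hl => ?_
    intro u hu
    have hl0 : (0:ℝ) ≤ l := (le_of_lt hl)
    have h1 := keyA' u hu l hl0
    have h2 := hCB l hl0
    have h3 := keyE l hl0
    rw [Real.norm_eq_abs, abs_mul, abs_mul, abs_of_pos (Real.exp_pos _)]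
    calc Real.exp (-2 * s' * l) * (|deriv A (u + l)| * |B l|)
        ≤ Real.exp (2 * |s'| * l) * ((C1' * Real.exp (-c * l)) * CB) := by
          apply mul_le_mul h3 _ (by positivity) (Real.exp_pos _).le
          exact mul_le_mul h1 h2 (abs_nonneg _) (by positivity)
      _ = C1' * CB * (Real.exp (2 * |s'| * l) * Real.exp (-c * l)) := by ring
      _ = C1' * CB * Real.exp (-l) := by rw [expmul]
  · refine Integrable.const_mul ?_ (C1' * CB)
    simpa [IntegrableOn] using exp_neg_integrableOn_Ioi (0:ℝ) (b := 1) one_pos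
  · refine ae_restrict_of_forall_mem measurableSet_Ioi fun l hl => fun u hu => ?_
    have h1 : HasDerivAt (fun u => A (u + l)) (deriv A (u + l)) u :=
      HasDerivAt.comp_add_const u l ((hAd (u + l)).hasDerivAt)
    exact ((h1.mul_const (B l)).const_mul (Real.exp (-2 * s' * l)))

lemma aux_s_deriv (W : ℝ → ℝ) (hW : Continuous W)
    (hWbd : ∀ c : ℝ, ∃ C, 0 < C ∧ ∀ l, (0:ℝ) ≤ l → |W l| ≤ C * Real.exp (-c * l)) (s : ℝ) :
    HasDerivAt (fun s' => ∫ l in Ioi (0:ℝ), Real.exp (-2 * s' * l) * W l)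
      (∫ l in Ioi (0:ℝ), -2 * l * Real.exp (-2 * s * l) * W l) s := by
  set c : ℝ := 2 * |s| + 3 with hc
  obtain ⟨C, hC0, hCb⟩ := hWbd c
  have keyE : ∀ s' ∈ Metric.ball s 1, ∀ l, (0:ℝ) ≤ l →
      Real.exp (-2 * s' * l) ≤ Real.exp ((2 * |s| + 2) * l) := by
    intro s' hs' l hl
    rw [Metric.mem_ball, Real.dist_eq, abs_sub_lt_iff] at hs'
    apply Real.exp_le_exp.2
    nlinarith [le_abs_self s, neg_abs_le s, hs'.1, hs'.2]
  have h := hasDerivAt_integral_of_dominated_loc_of_deriv_le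
    (F := fun s' l => Real.exp (-2 * s' * l) * W l)
    (F' := fun s' l => -2 * l * Real.exp (-2 * s' * l) * W l)
    (x₀ := s) (μ := volume.restrict (Ioi (0:ℝ)))
    (bound := fun l => 2 * C * (l * Real.exp (-l))) (s := Metric.ball s 1) (Metric.ball_mem_nhds _ one_pos)
    (Filter.Eventually.of_forall fun s' =>
      (Continuous.aestronglyMeasurable (by fun_prop)).restrict)
    ?_ (Continuous.aestronglyMeasurable (by fun_prop)).restrict ?_ ?_ ?_
  · exact h.2
  · refine aux_integrable (by fun_prop) (b := 1) one_pos (C := C) fun l hl => ?_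
    have h1 := hCb l hl
    have h2 := keyE s (Metric.mem_ball_self one_pos) l hl
    rw [abs_mul, abs_of_pos (Real.exp_pos _)]
    calc Real.exp (-2 * s * l) * |W l|
        ≤ Real.exp ((2 * |s| + 2) * l) * (C * Real.exp (-c * l)) := by
          apply mul_le_mul h2 h1 (abs_nonneg _) (Real.exp_pos _).le
      _ = C * (Real.exp ((2 * |s| + 2) * l) * Real.exp (-c * l)) := by ring
      _ ≤ C * Real.exp (-1 * l) := by
          rw [← Real.exp_add]
          have : (2 * |s| + 2) * l + -c * l = -l := by rw [hc]; ring
          rw [this, neg_one_mul]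
  · refine ae_restrict_of_forall_mem measurableSet_Ioi fun l hl s' hs' => ?_
    have hl0 : (0:ℝ) ≤ l := le_of_lt hl
    have h1 := hCb l hl0
    have h2 := keyE s' hs' l hl0
    rw [Real.norm_eq_abs, abs_mul, abs_mul, abs_of_pos (Real.exp_pos _)]
    have habs : |(-2 : ℝ) * l| = 2 * l := by
      rw [abs_mul]; simp [abs_of_nonneg hl0]
    rw [habs]
    calc 2 * l * Real.exp (-2 * s' * l) * |W l|
        ≤ 2 * l * Real.exp ((2 * |s| + 2) * l) * (C * Real.exp (-c * l)) := by
          apply mul_le_mul _ h1 (abs_nonneg _) (by positivity)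
          exact mul_le_mul_of_nonneg_left h2 (by positivity)
      _ = 2 * C * (l * (Real.exp ((2 * |s| + 2) * l) * Real.exp (-c * l))) := by ring
      _ = 2 * C * (l * Real.exp (-l)) := by
          rw [← Real.exp_add]
          have : (2 * |s| + 2) * l + -c * l = -l := by rw [hc]; ring
          rw [this]
  · have := (aux_int_mul_exp (b := 1) one_pos).const_mul (2 * C)
    simpa [neg_one_mul] using this
  · refine ae_restrict_of_forall_mem measurableSet_Ioi fun l hl s' hs' => ?_
    have h1 : HasDerivAt (fun s' : ℝ => -2 * s' * l) (-2 * l) s' := by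
      simpa using ((hasDerivAt_id s').const_mul (-2 : ℝ)).mul_const l
    have h2 := (h1.exp).mul_const (W l)
    refine h2.congr_deriv ?_
    ring

lemma aux_W_eq (A : ℝ → ℝ) (hA : ContDiff ℝ (⊤ : ℕ∞) A)
    (hAiry : ∀ x : ℝ, deriv (deriv A) x = x * A x)
    (hLA : ∀ c : ℝ, Tendsto (fun z => Real.exp (c * z) * A z) atTop (nhds 0))
    (hLA' : ∀ c : ℝ, Tendsto (fun z => Real.exp (c * z) * deriv A z) atTop (nhds 0))
    (x y z : ℝ) :
    deriv A (x + z) * A (y + z) - A (x + z) * deriv A (y + z)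
      = -((x - y) * ∫ l in Ioi (0:ℝ), A (x + z + l) * A (y + z + l)) := by
  have hAc : Continuous A := hA.continuous
  have hA'c : Continuous (deriv A) := hA.continuous_deriv (by simp)
  have hAd : Differentiable ℝ A := hA.differentiable (by simp)
  have hA2 : ContDiff ℝ ((⊤ : ℕ∞) : WithTop ℕ∞) (deriv A) :=
    (contDiff_infty_iff_deriv.mp (hA.of_le (by simp))).2
  have hA'd : Differentiable ℝ (deriv A) := hA2.differentiable (by simp)
  have hderiv : ∀ l : ℝ,
      HasDerivAt (fun l => deriv A (x + z + l) * A (y + z + l)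
          - A (x + z + l) * deriv A (y + z + l))
        ((x - y) * (A (x + z + l) * A (y + z + l))) l := by
    intro l
    have hd1 : HasDerivAt (fun l => deriv A (x + z + l)) (deriv (deriv A) (x + z + l)) l :=
      HasDerivAt.comp_const_add (x + z) l ((hA'd (x + z + l)).hasDerivAt)
    have hd2 : HasDerivAt (fun l => A (x + z + l)) (deriv A (x + z + l)) l :=
      HasDerivAt.comp_const_add (x + z) l ((hAd (x + z + l)).hasDerivAt)
    have hd3 : HasDerivAt (fun l => deriv A (y + z + l)) (deriv (deriv A) (y + z + l)) l :=
      HasDerivAt.comp_const_add (y + z) l ((hA'd (y + z + l)).hasDerivAt)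
    have hd4 : HasDerivAt (fun l => A (y + z + l)) (deriv A (y + z + l)) l :=
      HasDerivAt.comp_const_add (y + z) l ((hAd (y + z + l)).hasDerivAt)
    have h := (hd1.mul hd4).sub (hd2.mul hd3)
    refine h.congr_deriv ?_
    rw [hAiry, hAiry]
    ring
  have f'int : IntegrableOn
      (fun l => (x - y) * (A (x + z + l) * A (y + z + l))) (Ioi (0:ℝ)) := by
    obtain ⟨C1, hC10, hC1⟩ := aux_expBound hAc hLA 1 (x + z)
    obtain ⟨C2, hC20, hC2⟩ := aux_expBound hAc hLA 0 (y + z)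
    refine aux_integrable (by fun_prop) (b := 1) one_pos
      (C := |x - y| * C1 * C2) fun l hl => ?_
    have h1 := hC1 l hl
    have h2 := hC2 l hl
    rw [neg_zero, zero_mul, Real.exp_zero, mul_one] at h2
    rw [abs_mul, abs_mul]
    calc |x - y| * (|A (x + z + l)| * |A (y + z + l)|)
        ≤ |x - y| * ((C1 * Real.exp (-1 * l)) * C2) := by
          apply mul_le_mul_of_nonneg_left _ (abs_nonneg _)
          exact mul_le_mul h1 h2 (abs_nonneg _) (by positivity)
      _ = |x - y| * C1 * C2 * Real.exp (-1 * l) := by ring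
  have hten : Tendsto (fun l => deriv A (x + z + l) * A (y + z + l)
      - A (x + z + l) * deriv A (y + z + l)) atTop (nhds 0) := by
    have hA0 : Tendsto A atTop (nhds 0) := by simpa using hLA 0
    have hA'0 : Tendsto (deriv A) atTop (nhds 0) := by simpa using hLA' 0
    have shx : Tendsto (fun l : ℝ => x + z + l) atTop atTop :=
      tendsto_atTop_add_const_left atTop (x + z) tendsto_id
    have shy : Tendsto (fun l : ℝ => y + z + l) atTop atTop :=
      tendsto_atTop_add_const_left atTop (y + z) tendsto_id
    have t1 := (hA'0.comp shx).mul (hA0.comp shy)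
    have t2 := (hA0.comp shx).mul (hA'0.comp shy)
    simpa using t1.sub t2
  have key := integral_Ioi_of_hasDerivAt_of_tendsto' (a := 0) (m := 0)
    (f := fun l => deriv A (x + z + l) * A (y + z + l)
        - A (x + z + l) * deriv A (y + z + l))
    (f' := fun l => (x - y) * (A (x + z + l) * A (y + z + l)))
    (fun l _ => hderiv l) f'int hten
  simp only [add_zero, zero_sub] at key
  rw [MeasureTheory.integral_const_mul] at key
  linarith [key]

theorem extended_airy_kernel_s_deriv_identity
    (A : ℝ → ℝ) (hA : ContDiff ℝ (⊤ : ℕ∞) A)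
    (hAiry : ∀ x : ℝ, deriv (deriv A) x = x * A x)
    (hInt : ∀ (c : ℝ) (n : ℕ),
      IntegrableOn (fun z => z ^ n * Real.exp (c * z) * A z) (Ioi 0))
    (hInt' : ∀ (c : ℝ) (n : ℕ),
      IntegrableOn (fun z => z ^ n * Real.exp (c * z) * deriv A z) (Ioi 0))
    (hLim : ∀ (c : ℝ) (n : ℕ),
      Tendsto (fun z => z ^ n * Real.exp (c * z) * A z) atTop (nhds 0))
    (hLim' : ∀ (c : ℝ) (n : ℕ),
      Tendsto (fun z => z ^ n * Real.exp (c * z) * deriv A z) atTop (nhds 0))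
    (K : ℝ → ℝ → ℝ)
    (hK : ∀ x y : ℝ, K x y = ∫ l in Ioi (0:ℝ), A (x + l) * A (y + l))
    (Kt : ℝ → ℝ → ℝ → ℝ)
    (hKt : ∀ s x y : ℝ,
      Kt s x y = ∫ l in Ioi (0:ℝ), Real.exp (-2 * s * l) * (A (x + l) * A (y + l)))
    (s x y : ℝ) :
    deriv (fun s' => deriv (fun x' => Kt s' x' y) x - deriv (fun y' => Kt s' x y') y) s
      = 2 * (x - y) * (∫ z in Ioi (0:ℝ), z * Real.exp (-2 * s * z) * K (x + z) (y + z))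
    ∧ s * deriv (fun s' => deriv (fun x' => Kt s' x' y) x - deriv (fun y' => Kt s' x y') y) s
      = 2 * s * (x - y) *
          ∫ z in Ioi (0:ℝ), z * Real.exp (-2 * s * z) * K (x + z) (y + z) := by
  have hAc : Continuous A := hA.continuous
  have hA'c : Continuous (deriv A) := hA.continuous_deriv (by simp)
  have hLA : ∀ c : ℝ, Tendsto (fun z => Real.exp (c * z) * A z) atTop (nhds 0) := by
    intro c; simpa using hLim c 0
  have hLA' : ∀ c : ℝ, Tendsto (fun z => Real.exp (c * z) * deriv A z) atTop (nhds 0) := by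
    intro c; simpa using hLim' c 0
  -- bounds for the fixed-argument factors
  obtain ⟨CY, hCY0, hCY⟩ := aux_expBound hAc hLA 0 y
  obtain ⟨CX, hCX0, hCX⟩ := aux_expBound hAc hLA 0 x
  have hCY' : ∀ l, (0:ℝ) ≤ l → |A (y + l)| ≤ CY := fun l hl => by
    simpa using hCY l hl
  have hCX' : ∀ l, (0:ℝ) ≤ l → |A (x + l)| ≤ CX := fun l hl => by
    simpa using hCX l hl
  -- the function equality
  have hfun : (fun s' => deriv (fun x' => Kt s' x' y) x - deriv (fun y' => Kt s' x y') y)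
      = fun s' => ∫ l in Ioi (0:ℝ), Real.exp (-2 * s' * l) *
          (deriv A (x + l) * A (y + l) - A (x + l) * deriv A (y + l)) := by
    funext s'
    have hx := aux_param_deriv A hA hLA hLA' (fun l => A (y + l))
      (hAc.comp (continuous_const.add continuous_id)) CY hCY0 hCY' s' x
    have hy := aux_param_deriv A hA hLA hLA' (fun l => A (x + l))
      (hAc.comp (continuous_const.add continuous_id)) CX hCX0 hCX' s' y
    have e1 : (fun x' => Kt s' x' y)
        = fun u => ∫ l in Ioi (0:ℝ), Real.exp (-2 * s' * l) * (A (u + l) * A (y + l)) :=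
      funext fun u => hKt s' u y
    have e2 : (fun y' => Kt s' x y')
        = fun v => ∫ l in Ioi (0:ℝ), Real.exp (-2 * s' * l) * (A (v + l) * A (x + l)) := by
      funext v
      rw [hKt s' x v]
      congr 1
      funext l
      ring
    rw [e1, e2, hx.2.deriv, hy.2.deriv, ← integral_sub hx.1 hy.1]
    congr 1
    funext l
    ring
  -- bound for W
  have hWbd : ∀ c : ℝ, ∃ C, 0 < C ∧ ∀ l, (0:ℝ) ≤ l →
      |deriv A (x + l) * A (y + l) - A (x + l) * deriv A (y + l)|
        ≤ C * Real.exp (-c * l) := by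
    intro c
    obtain ⟨C1, hC10, hC1⟩ := aux_expBound hA'c hLA' c x
    obtain ⟨C4, hC40, hC4⟩ := aux_expBound hA'c hLA' c y
    refine ⟨C1 * CY + CX * C4, by positivity, fun l hl => ?_⟩
    have h1 := hC1 l hl
    have h2 := hCY' l hl
    have h3 := hCX' l hl
    have h4 := hC4 l hl
    have e1 : |deriv A (x + l) * A (y + l)| ≤ C1 * Real.exp (-c * l) * CY := by
      rw [abs_mul]
      exact mul_le_mul h1 h2 (abs_nonneg _) (by positivity)
    have e2 : |A (x + l) * deriv A (y + l)| ≤ CX * (C4 * Real.exp (-c * l)) := by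
      rw [abs_mul]
      exact mul_le_mul h3 h4 (abs_nonneg _) (by positivity)
    calc |deriv A (x + l) * A (y + l) - A (x + l) * deriv A (y + l)|
        ≤ |deriv A (x + l) * A (y + l)| + |A (x + l) * deriv A (y + l)| := abs_sub _ _
      _ ≤ C1 * Real.exp (-c * l) * CY + CX * (C4 * Real.exp (-c * l)) := add_le_add e1 e2
      _ = (C1 * CY + CX * C4) * Real.exp (-c * l) := by ring
  have hWc : Continuous (fun l => deriv A (x + l) * A (y + l)
      - A (x + l) * deriv A (y + l)) := by fun_prop
  have hB := aux_s_deriv _ hWc hWbd s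
  have hd : deriv (fun s' => deriv (fun x' => Kt s' x' y) x - deriv (fun y' => Kt s' x y') y) s
      = ∫ l in Ioi (0:ℝ), -2 * l * Real.exp (-2 * s * l) *
          (deriv A (x + l) * A (y + l) - A (x + l) * deriv A (y + l)) := by
    rw [hfun]
    exact hB.deriv
  have hfinal : (∫ l in Ioi (0:ℝ), -2 * l * Real.exp (-2 * s * l) *
        (deriv A (x + l) * A (y + l) - A (x + l) * deriv A (y + l)))
      = 2 * (x - y) * ∫ z in Ioi (0:ℝ), z * Real.exp (-2 * s * z) * K (x + z) (y + z) := by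
    rw [show (2 * (x - y) * ∫ z in Ioi (0:ℝ), z * Real.exp (-2 * s * z) * K (x + z) (y + z))
        = ∫ z in Ioi (0:ℝ), 2 * (x - y) * (z * Real.exp (-2 * s * z) * K (x + z) (y + z))
      from (MeasureTheory.integral_const_mul _ _).symm]
    apply setIntegral_congr_fun measurableSet_Ioi
    intro z hz
    have hW := aux_W_eq A hA hAiry hLA hLA' x y z
    rw [← hK (x + z) (y + z)] at hW
    show -2 * z * Real.exp (-2 * s * z) *
        (deriv A (x + z) * A (y + z) - A (x + z) * deriv A (y + z))
      = 2 * (x - y) * (z * Real.exp (-2 * s * z) * K (x + z) (y + z))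
    rw [hW]
    ring
  refine ⟨hd.trans hfinal, ?_⟩
  rw [hd, hfinal]
  ring
end
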